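/- arXiv:math/9904123 — 5 statements merged into one kernel-verified Lean document; each statement's English description precedes it below -/
import Mathlib

section
/- Let γ : ℝ → ℝ² be a closed plane curve of length L, parametrized by arclength, whose tangent vector has odd rotation number n (this is the condition that the induced spin structure on γ is non-trivial). Let κ(s) = ‖γ''(s)‖ denote its curvature. Then for every smooth L-periodic function f : ℝ → ℝ one has ∫₀^L (4 f'(s)² + κ(s)² f(s)²) ds ≥ (4π²/L²) ∫₀^L f(s)² ds; that is, the first eigenvalue μ₁ of the periodic Sturm–Liouville operator −4 d²/ds² + κ² on [0, L] satisfies 4π²/L² ≤ μ₁. -/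
open Real MeasureTheory

open Set intervalIntegral AddCircle in
private lemma parseval_cont_aux {T : ℝ} [hT : Fact (0 < T)] (f : C(AddCircle T, ℂ)) :
    (Summable fun n : ℤ => ‖fourierCoeff (⇑f) n‖ ^ 2) ∧
    ∑' n : ℤ, ‖fourierCoeff (⇑f) n‖ ^ 2
      = ∫ t : AddCircle T, ‖f t‖ ^ 2 ∂haarAddCircle := by
  set fL : Lp ℂ 2 (@haarAddCircle T hT) := ContinuousMap.toLp 2 haarAddCircle ℂ f with hfL
  have hcoeff : ∀ n : ℤ, fourierCoeff (⇑fL) n = fourierCoeff (⇑f) n := fun n =>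
    fourierCoeff_toLp f n
  have hsum : Summable fun n : ℤ => ‖fourierCoeff (⇑f) n‖ ^ 2 := by
    have hmem := lp.memℓp (fourierBasis.repr fL)
    rw [memℓp_gen_iff (by norm_num)] at hmem
    have heq : (fun n : ℤ => ‖(fourierBasis.repr fL) n‖ ^ (ENNReal.toReal 2))
        = fun n : ℤ => ‖fourierCoeff (⇑f) n‖ ^ 2 := by
      funext n
      rw [fourierBasis_repr, hcoeff n,
        show (ENNReal.toReal 2) = ((2:ℕ):ℝ) by norm_num, Real.rpow_natCast]
    rwa [heq] at hmem
  refine ⟨hsum, ?_⟩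
  have hpars := tsum_sq_fourierCoeff fL
  simp_rw [hcoeff] at hpars
  rw [hpars]
  refine integral_congr_ae ?_
  filter_upwards [ContinuousMap.coeFn_toLp (p := 2) (μ := @haarAddCircle T hT) (𝕜 := ℂ) f]
    with t ht
  rw [← hfL] at ht
  rw [ht]

open Set intervalIntegral AddCircle in
private lemma haar_to_interval_aux {T : ℝ} [hT : Fact (0 < T)] (u : ℝ → ℂ) :
    ∫ s in (0:ℝ)..T, ‖u s‖ ^ 2
      = T * ∫ t : AddCircle T, ‖liftIco T 0 u t‖ ^ 2 ∂haarAddCircle := by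
  set F := liftIco T 0 u with hF
  have h1 : ∫ x in (0:ℝ)..(0 + T), ‖F ↑x‖ ^ 2 = ∫ t : AddCircle T, ‖F t‖ ^ 2 ∂volume :=
    AddCircle.intervalIntegral_preimage T 0 (fun t => ‖F t‖ ^ 2)
  have h2 : ∫ t : AddCircle T, ‖F t‖ ^ 2 ∂volume
      = T * ∫ t : AddCircle T, ‖F t‖ ^ 2 ∂haarAddCircle := by
    rw [volume_eq_smul_haarAddCircle, MeasureTheory.integral_smul_measure,
      ENNReal.toReal_ofReal hT.out.le, smul_eq_mul]
  have h3 : ∫ x in (0:ℝ)..(0 + T), ‖F ↑x‖ ^ 2 = ∫ x in (0:ℝ)..T, ‖u x‖ ^ 2 := by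
    rw [zero_add]
    rw [integral_of_le hT.out.le, integral_of_le hT.out.le,
      integral_Ioc_eq_integral_Ioo, integral_Ioc_eq_integral_Ioo]
    refine setIntegral_congr_fun measurableSet_Ioo (fun x hx => ?_)
    rw [hF, liftIco_coe_apply]
    rw [zero_add]
    exact ⟨hx.1.le, hx.2⟩
  rw [← h3, h1, h2]

open Set intervalIntegral AddCircle in
private lemma coeff_rel_aux {T : ℝ} [hT : Fact (0 < T)] (u : ℝ → ℂ) (hu : ContDiff ℝ (⊤ : ℕ∞) u)
    (huper : Function.Periodic u T) {n : ℤ} (hn : n ≠ 0) :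
    (2 * π / T) ^ 2 * ‖fourierCoeffOn (lt_add_of_pos_right 0 hT.out) u n‖ ^ 2
      ≤ ‖fourierCoeffOn (lt_add_of_pos_right 0 hT.out) (deriv u) n‖ ^ 2 := by
  have hder : ∀ x ∈ uIcc (0:ℝ) (0 + T), HasDerivAt u (deriv u x) x := fun x _ =>
    (hu.differentiable (by simp) x).hasDerivAt
  have hint : IntervalIntegrable (deriv u) volume 0 (0 + T) :=
    (hu.continuous_deriv (by simp)).intervalIntegrable _ _
  have hrel := fourierCoeffOn_of_hasDerivAt (lt_add_of_pos_right 0 hT.out) hn hder hint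
  rw [huper 0, sub_self, mul_zero, zero_sub] at hrel
  set A := fourierCoeffOn (lt_add_of_pos_right 0 hT.out) u n
  set B := fourierCoeffOn (lt_add_of_pos_right 0 hT.out) (deriv u) n
  have hnorm : ‖A‖ = T / (2 * π * |(n : ℝ)|) * ‖B‖ := by
    rw [hrel]
    simp [norm_div, norm_mul, Complex.norm_real, Complex.norm_I,
      abs_of_pos hT.out, abs_of_pos Real.pi_pos]
    rw [div_eq_mul_inv, mul_inv, mul_inv]
    ring
  have hn1 : (1:ℝ) ≤ |(n:ℝ)| := by
    rw [← Int.cast_abs]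
    exact_mod_cast Int.one_le_abs hn
  have hpi := Real.pi_pos
  have hT0 := hT.out
  rw [hnorm]
  have h1 : 2 * π / T * (T / (2 * π * |(n : ℝ)|) * ‖B‖) = ‖B‖ / |(n:ℝ)| := by
    field_simp
  calc (2 * π / T) ^ 2 * (T / (2 * π * |(n : ℝ)|) * ‖B‖) ^ 2
      = (2 * π / T * (T / (2 * π * |(n : ℝ)|) * ‖B‖)) ^ 2 := by ring
    _ = (‖B‖ / |(n:ℝ)|) ^ 2 := by rw [h1]
    _ ≤ ‖B‖ ^ 2 := by
        apply pow_le_pow_left₀ (by positivity)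
        rw [div_le_iff₀ (by linarith)]
        nlinarith [norm_nonneg B]

open Set intervalIntegral AddCircle in
private lemma wirtinger_complex_aux {T : ℝ} [hT : Fact (0 < T)] (u : ℝ → ℂ)
    (hu : ContDiff ℝ (⊤ : ℕ∞) u)
    (huper : Function.Periodic u T) (hmean : ∫ s in (0:ℝ)..T, u s = 0) :
    (2 * π / T) ^ 2 * ∫ s in (0:ℝ)..T, ‖u s‖ ^ 2 ≤ ∫ s in (0:ℝ)..T, ‖deriv u s‖ ^ 2 := by
  have huc : Continuous u := hu.continuous
  have hu'c : Continuous (deriv u) := hu.continuous_deriv (by simp)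
  have hu'per : Function.Periodic (deriv u) T := by
    intro s
    have e : (fun t => u (t + T)) = u := funext huper
    conv_rhs => rw [← e]
    rw [deriv_comp_add_const]
  have hcF : Continuous (liftIco T 0 u) :=
    liftIco_zero_continuous (by rw [← huper 0, zero_add]) huc.continuousOn
  have hcF' : Continuous (liftIco T 0 (deriv u)) :=
    liftIco_zero_continuous (by rw [← hu'per 0, zero_add]) hu'c.continuousOn
  set F : C(AddCircle T, ℂ) := ⟨liftIco T 0 u, hcF⟩
  set F' : C(AddCircle T, ℂ) := ⟨liftIco T 0 (deriv u), hcF'⟩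
  have hcoeffF : ∀ m : ℤ, fourierCoeff (⇑F) m
      = fourierCoeffOn (lt_add_of_pos_right 0 hT.out) u m := fun m =>
    fourierCoeff_liftIco_eq u m
  have hcoeffF' : ∀ m : ℤ, fourierCoeff (⇑F') m
      = fourierCoeffOn (lt_add_of_pos_right 0 hT.out) (deriv u) m := fun m =>
    fourierCoeff_liftIco_eq (deriv u) m
  have hc0 : fourierCoeff (⇑F) 0 = 0 := by
    rw [hcoeffF 0, fourierCoeffOn_eq_integral]
    simp only [neg_zero, fourier_zero, one_smul, zero_add, sub_zero]
    rw [hmean, smul_zero]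
  have hterm : ∀ m : ℤ, (2 * π / T) ^ 2 * ‖fourierCoeff (⇑F) m‖ ^ 2
      ≤ ‖fourierCoeff (⇑F') m‖ ^ 2 := by
    intro m
    rcases eq_or_ne m 0 with rfl | hm
    · rw [hc0]
      simp [sq_nonneg]
    · rw [hcoeffF m, hcoeffF' m]
      exact coeff_rel_aux u hu huper hm
  obtain ⟨hsumF, hparsF⟩ := parseval_cont_aux F
  obtain ⟨hsumF', hparsF'⟩ := parseval_cont_aux F'
  have hsum_le : (2 * π / T) ^ 2 * ∑' m : ℤ, ‖fourierCoeff (⇑F) m‖ ^ 2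
      ≤ ∑' m : ℤ, ‖fourierCoeff (⇑F') m‖ ^ 2 := by
    rw [← tsum_mul_left]
    exact Summable.tsum_le_tsum hterm (hsumF.mul_left _) hsumF'
  have hIF := haar_to_interval_aux (T := T) u
  have hIF' := haar_to_interval_aux (T := T) (deriv u)
  have hTpos := hT.out
  rw [hparsF, hparsF'] at hsum_le
  have hFc : (fun t => ‖F t‖ ^ 2) = fun t : AddCircle T => ‖liftIco T 0 u t‖ ^ 2 := rfl
  have hF'c : (fun t => ‖F' t‖ ^ 2) = fun t : AddCircle T => ‖liftIco T 0 (deriv u) t‖ ^ 2 := rfl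
  rw [hIF, hIF']
  calc (2 * π / T) ^ 2 * (T * ∫ t : AddCircle T, ‖liftIco T 0 u t‖ ^ 2 ∂haarAddCircle)
      = T * ((2 * π / T) ^ 2 * ∫ t : AddCircle T, ‖F t‖ ^ 2 ∂haarAddCircle) := by
        rw [hFc]; ring
    _ ≤ T * ∫ t : AddCircle T, ‖F' t‖ ^ 2 ∂haarAddCircle :=
        mul_le_mul_of_nonneg_left hsum_le hTpos.le
    _ = T * ∫ t : AddCircle T, ‖liftIco T 0 (deriv u) t‖ ^ 2 ∂haarAddCircle := by rw [hF'c]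

open Set intervalIntegral in
private lemma periodic_halve_aux (L : ℝ) (p : ℝ → ℝ) (hp : Continuous p)
    (hper : ∀ s, p (s + L) = p s) :
    ∫ s in (0:ℝ)..(2 * L), p s = 2 * ∫ s in (0:ℝ)..L, p s := by
  have h1 : ∫ s in (0:ℝ)..(2 * L), p s
      = (∫ s in (0:ℝ)..L, p s) + ∫ s in L..(2 * L), p s :=
    (intervalIntegral.integral_add_adjacent_intervals
      (hp.intervalIntegrable _ _) (hp.intervalIntegrable _ _)).symm
  have h2 : ∫ s in L..(2 * L), p s = ∫ s in (0:ℝ)..L, p s := by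
    have := (Function.Periodic.intervalIntegral_add_eq (T := L) hper L 0)
    rwa [zero_add, (by ring : L + L = 2 * L)] at this
  rw [h1, h2]; ring

open Set intervalIntegral in
private lemma antiperiodic_wirtinger_aux (L : ℝ) (hL : 0 < L) (g h : ℝ → ℝ)
    (hg : ContDiff ℝ (⊤ : ℕ∞) g) (hh : ContDiff ℝ (⊤ : ℕ∞) h)
    (hga : ∀ s, g (s + L) = -g s) (hha : ∀ s, h (s + L) = -h s) :
    (π / L) ^ 2 * ∫ s in (0:ℝ)..L, (g s ^ 2 + h s ^ 2)
      ≤ ∫ s in (0:ℝ)..L, ((deriv g s) ^ 2 + (deriv h s) ^ 2) := by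
  haveI : Fact (0 < 2 * L) := ⟨by linarith⟩
  set u : ℝ → ℂ := fun s => (g s : ℂ) + (h s : ℂ) * Complex.I with hu_def
  have hucd : ContDiff ℝ (⊤ : ℕ∞) u :=
    (Complex.ofRealCLM.contDiff.comp hg).add
      ((Complex.ofRealCLM.contDiff.comp hh).mul contDiff_const)
  have hud : ∀ s, HasDerivAt u
      (Complex.ofReal (deriv g s) + Complex.ofReal (deriv h s) * Complex.I) s := fun s =>
    ((hg.differentiable (by simp) s).hasDerivAt.ofReal_comp).add
      (((hh.differentiable (by simp) s).hasDerivAt.ofReal_comp).mul_const Complex.I)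
  have hderiv_u : ∀ s, deriv u s
      = Complex.ofReal (deriv g s) + Complex.ofReal (deriv h s) * Complex.I := fun s =>
    (hud s).deriv
  have hanti : ∀ s, u (s + L) = -u s := by
    intro s
    simp only [hu_def, hga s, hha s, Complex.ofReal_neg]
    ring
  have hper2 : Function.Periodic u (2 * L) := by
    intro s
    have e : s + 2 * L = s + L + L := by ring
    rw [e, hanti, hanti, neg_neg]
  have hnorm : ∀ s, ‖u s‖ ^ 2 = g s ^ 2 + h s ^ 2 := by
    intro s
    rw [hu_def]
    simp [Complex.sq_norm, Complex.normSq_apply]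
    ring
  have hnorm' : ∀ s, ‖deriv u s‖ ^ 2 = (deriv g s) ^ 2 + (deriv h s) ^ 2 := by
    intro s
    rw [hderiv_u s]
    simp [Complex.sq_norm, Complex.normSq_apply]
    ring
  have hmean : ∫ s in (0:ℝ)..(2 * L), u s = 0 := by
    have h1 : ∫ s in (0:ℝ)..(2 * L), u s
        = (∫ s in (0:ℝ)..L, u s) + ∫ s in L..(2 * L), u s :=
      (intervalIntegral.integral_add_adjacent_intervals
        (hucd.continuous.intervalIntegrable _ _) (hucd.continuous.intervalIntegrable _ _)).symm
    have h2 : ∫ s in L..(2 * L), u s = ∫ s in (0:ℝ)..L, u (s + L) := by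
      rw [intervalIntegral.integral_comp_add_right (fun x => u x) L, zero_add,
        (by ring : L + L = 2 * L)]
    have h3 : ∫ s in (0:ℝ)..L, u (s + L) = - ∫ s in (0:ℝ)..L, u s := by
      rw [← intervalIntegral.integral_neg]
      exact intervalIntegral.integral_congr (fun s _ => hanti s)
    rw [h1, h2, h3]; ring
  have key := wirtinger_complex_aux (T := 2 * L) u hucd hper2 hmean
  have hgper : ∀ s, ‖u (s + L)‖ ^ 2 = ‖u s‖ ^ 2 := by
    intro s; rw [hanti s, norm_neg]
  have hg'anti : ∀ s, deriv u (s + L) = - deriv u s := by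
    intro s
    have e : (fun t => u (t + L)) = fun t => -u t := funext hanti
    have e2 : deriv u (s + L) = deriv (fun t => u (t + L)) s := (deriv_comp_add_const u L s).symm
    rw [e2, e]; exact deriv.neg
  have hhalf1 : ∫ s in (0:ℝ)..(2 * L), ‖u s‖ ^ 2 = 2 * ∫ s in (0:ℝ)..L, ‖u s‖ ^ 2 :=
    periodic_halve_aux L _ (hucd.continuous.norm.pow 2) hgper
  have hhalf2 : ∫ s in (0:ℝ)..(2 * L), ‖deriv u s‖ ^ 2
      = 2 * ∫ s in (0:ℝ)..L, ‖deriv u s‖ ^ 2 := by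
    refine periodic_halve_aux L _ ?_ (fun s => by rw [hg'anti s, norm_neg])
    exact (hucd.continuous_deriv (by simp)).norm.pow 2
  rw [hhalf1, hhalf2] at key
  have e1 : ∫ s in (0:ℝ)..L, ‖u s‖ ^ 2 = ∫ s in (0:ℝ)..L, (g s ^ 2 + h s ^ 2) :=
    intervalIntegral.integral_congr (fun s _ => hnorm s)
  have e2 : ∫ s in (0:ℝ)..L, ‖deriv u s‖ ^ 2
      = ∫ s in (0:ℝ)..L, ((deriv g s) ^ 2 + (deriv h s) ^ 2) :=
    intervalIntegral.integral_congr (fun s _ => hnorm' s)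
  rw [e1, e2] at key
  have epi : (2 * π / (2 * L)) ^ 2 = (π / L) ^ 2 := by
    congr 1
    exact mul_div_mul_left π L two_ne_zero
  rw [epi] at key
  linarith

open Set intervalIntegral in
private lemma int_const_aux (q : ℝ → ℝ) (hq : Continuous q)
    (hint : ∀ s, ∃ k : ℤ, q s = 2 * π * k) : ∀ s, q s = q 0 := by
  intro s
  obtain ⟨k, hk⟩ := hint s
  obtain ⟨k0, hk0⟩ := hint 0
  by_contra hne
  have hkk : k ≠ k0 := by
    rintro rfl
    exact hne (hk.trans hk0.symm)
  have hiv := intermediate_value_uIcc (a := (0:ℝ)) (b := s) (f := q) hq.continuousOn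
  have hpi := Real.pi_pos
  rcases hkk.lt_or_gt with hlt | hlt
  · have hcmem : 2 * π * k + π ∈ uIcc (q 0) (q s) := by
      rw [Set.mem_uIcc]
      right
      constructor
      · rw [hk]; linarith
      · rw [hk0]
        have : (k : ℝ) + 1 ≤ k0 := by exact_mod_cast hlt
        nlinarith
    obtain ⟨t, _, ht⟩ := hiv hcmem
    obtain ⟨m, hm⟩ := hint t
    rw [hm] at ht
    have hz : ((2 * (m - k) - 1 : ℤ) : ℝ) * π = 0 := by push_cast; linarith
    have h2 : ((2 * (m - k) - 1 : ℤ) : ℝ) = 0 := by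
      rcases mul_eq_zero.1 hz with h | h
      · exact h
      · exact absurd h hpi.ne'
    have : (2 * (m - k) - 1 : ℤ) = 0 := by exact_mod_cast h2
    omega
  · have hcmem : 2 * π * k0 + π ∈ uIcc (q 0) (q s) := by
      rw [Set.mem_uIcc]
      left
      constructor
      · rw [hk0]; linarith
      · rw [hk]
        have : (k0 : ℝ) + 1 ≤ k := by exact_mod_cast hlt
        nlinarith
    obtain ⟨t, _, ht⟩ := hiv hcmem
    obtain ⟨m, hm⟩ := hint t
    rw [hm] at ht
    have hz : ((2 * (m - k0) - 1 : ℤ) : ℝ) * π = 0 := by push_cast; linarith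
    have h2 : ((2 * (m - k0) - 1 : ℤ) : ℝ) = 0 := by
      rcases mul_eq_zero.1 hz with h | h
      · exact h
      · exact absurd h hpi.ne'
    have : (2 * (m - k0) - 1 : ℤ) = 0 := by exact_mod_cast h2
    omega

/-- **Theorem 1 (plane case).** For a closed plane curve of length `L`, parametrized by
arclength, whose tangent vector has odd rotation number `n`, the first eigenvalue of the
periodic Sturm–Liouville operator `-4 d²/ds² + κ²` is at least `4π²/L²`: every smooth
`L`-periodic test function `f` satisfies the corresponding Rayleigh-quotient inequality. -/
theorem sturm_liouville_lower_bound_plane_curve_odd_rotation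
    (L : ℝ) (hL : 0 < L) (γ : ℝ → EuclideanSpace ℝ (Fin 2))
    (hγ : ContDiff ℝ (⊤ : ℕ∞) γ)
    (hper : ∀ s : ℝ, γ (s + L) = γ s)
    (hunit : ∀ s : ℝ, ‖deriv γ s‖ = 1)
    (θ : ℝ → ℝ) (hθ : ContDiff ℝ (⊤ : ℕ∞) θ)
    (htangent : ∀ s : ℝ, deriv γ s
      = (WithLp.equiv 2 (Fin 2 → ℝ)).symm ![Real.cos (θ s), Real.sin (θ s)])
    (n : ℤ) (hn : Odd n) (hrot : θ L - θ 0 = 2 * π * n)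
    (f : ℝ → ℝ) (hf : ContDiff ℝ (⊤ : ℕ∞) f) (hfper : ∀ s : ℝ, f (s + L) = f s) :
    (∫ s in (0:ℝ)..L,
        (4 * (deriv f s)^2 + ‖deriv (deriv γ) s‖^2 * (f s)^2))
      ≥ (4 * π^2 / L^2) * ∫ s in (0:ℝ)..L, (f s)^2 := by
  have hθd : ∀ s, HasDerivAt θ (deriv θ s) s := fun s =>
    (hθ.differentiable (by simp) s).hasDerivAt
  have hfd : ∀ s, HasDerivAt f (deriv f s) s := fun s =>
    (hf.differentiable (by simp) s).hasDerivAt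
  set Φ : (Fin 2 → ℝ) ≃L[ℝ] EuclideanSpace ℝ (Fin 2) := (EuclideanSpace.equiv (Fin 2) ℝ).symm
    with hΦ
  have hΦcoe : ∀ v : Fin 2 → ℝ, Φ v = (WithLp.equiv 2 (Fin 2 → ℝ)).symm v := fun _ => rfl
  -- curvature squared equals (θ')²
  have hκ : ∀ s, ‖deriv (deriv γ) s‖ ^ 2 = (deriv θ s) ^ 2 := by
    intro s
    have hpi : HasDerivAt (fun t => (![Real.cos (θ t), Real.sin (θ t)] : Fin 2 → ℝ))
        (![-Real.sin (θ s) * deriv θ s, Real.cos (θ s) * deriv θ s]) s := by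
      rw [hasDerivAt_pi]
      intro i
      fin_cases i
      · simpa using (hθd s).cos
      · simpa using (hθd s).sin
    have hdd : HasDerivAt (deriv γ)
        (Φ ![-Real.sin (θ s) * deriv θ s, Real.cos (θ s) * deriv θ s]) s := by
      have e : deriv γ = fun t => Φ ![Real.cos (θ t), Real.sin (θ t)] := by
        funext t; rw [htangent t, hΦcoe]
      rw [e]
      exact (Φ.hasFDerivAt.comp_hasDerivAt s hpi)
    rw [hdd.deriv, EuclideanSpace.norm_eq, Real.sq_sqrt (by positivity)]
    have e0 : (Φ ![-Real.sin (θ s) * deriv θ s, Real.cos (θ s) * deriv θ s]) 0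
        = -Real.sin (θ s) * deriv θ s := rfl
    have e1 : (Φ ![-Real.sin (θ s) * deriv θ s, Real.cos (θ s) * deriv θ s]) 1
        = Real.cos (θ s) * deriv θ s := rfl
    rw [Fin.sum_univ_two, e0, e1, Real.norm_eq_abs, Real.norm_eq_abs, sq_abs, sq_abs]
    nlinarith [Real.sin_sq_add_cos_sq (θ s)]
  -- θ is quasi-periodic with jump 2πn
  have hθL : ∀ s, θ (s + L) = θ s + 2 * π * n := by
    have hcs : ∀ s, Real.cos (θ (s + L)) = Real.cos (θ s)
        ∧ Real.sin (θ (s + L)) = Real.sin (θ s) := by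
      intro s
      have hdγper : deriv γ (s + L) = deriv γ s := by
        have e : (fun t => γ (t + L)) = γ := funext hper
        rw [← deriv_comp_add_const γ L s, e]
      rw [htangent (s + L), htangent s] at hdγper
      have hvec := (WithLp.equiv 2 (Fin 2 → ℝ)).symm.injective hdγper
      exact ⟨by simpa using congrFun hvec 0, by simpa using congrFun hvec 1⟩
    have hkex : ∀ s, ∃ k : ℤ, θ (s + L) - θ s = 2 * π * k := by
      intro s
      have h1 : Real.cos (θ (s + L) - θ s) = 1 := by
        rw [Real.cos_sub, (hcs s).1, (hcs s).2]
        linear_combination Real.sin_sq_add_cos_sq (θ s)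
      obtain ⟨k, hk⟩ := (Real.cos_eq_one_iff _).1 h1
      exact ⟨k, by linarith [hk]⟩
    have hconst := int_const_aux (fun s => θ (s + L) - θ s)
      ((hθ.continuous.comp (continuous_id.add continuous_const)).sub hθ.continuous) hkex
    intro s
    have := hconst s
    simp only [zero_add] at this
    rw [hrot] at this
    linarith
  -- the test pair
  set g : ℝ → ℝ := fun s => f s * Real.cos (θ s / 2) with hg_def
  set h : ℝ → ℝ := fun s => f s * Real.sin (θ s / 2) with hh_def
  have hgc : ContDiff ℝ (⊤ : ℕ∞) g := hf.mul (Real.contDiff_cos.comp (hθ.div_const 2))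
  have hhc : ContDiff ℝ (⊤ : ℕ∞) h := hf.mul (Real.contDiff_sin.comp (hθ.div_const 2))
  have hgd : ∀ s, HasDerivAt g
      (deriv f s * Real.cos (θ s / 2)
        + f s * (-Real.sin (θ s / 2) * (deriv θ s / 2))) s := fun s =>
    (hfd s).mul (((hθd s).div_const 2).cos)
  have hhd : ∀ s, HasDerivAt h
      (deriv f s * Real.sin (θ s / 2)
        + f s * (Real.cos (θ s / 2) * (deriv θ s / 2))) s := fun s =>
    (hfd s).mul (((hθd s).div_const 2).sin)
  -- antiperiodicity from odd rotation number
  obtain ⟨m, hm⟩ := hn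
  have hhalfshift : ∀ s, θ (s + L) / 2 = (θ s / 2 + π) + (m : ℝ) * (2 * π) := by
    intro s
    rw [hθL s, hm]
    push_cast
    ring
  have hga : ∀ s, g (s + L) = -g s := by
    intro s
    simp only [hg_def, hfper s]
    rw [hhalfshift s, Real.cos_add_int_mul_two_pi, Real.cos_add_pi]
    ring
  have hha : ∀ s, h (s + L) = -h s := by
    intro s
    simp only [hh_def, hfper s]
    rw [hhalfshift s, Real.sin_add_int_mul_two_pi, Real.sin_add_pi]
    ring
  have key := antiperiodic_wirtinger_aux L hL g h hgc hhc hga hha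
  -- pointwise identities
  have hA : ∀ s, 4 * (deriv f s) ^ 2 + ‖deriv (deriv γ) s‖ ^ 2 * (f s) ^ 2
      = 4 * ((deriv g s) ^ 2 + (deriv h s) ^ 2) := by
    intro s
    rw [hκ s, (hgd s).deriv, (hhd s).deriv]
    linear_combination (-(4 * (deriv f s) ^ 2 + (f s) ^ 2 * (deriv θ s) ^ 2)) *
      (Real.sin_sq_add_cos_sq (θ s / 2))
  have hB : ∀ s, (f s) ^ 2 = g s ^ 2 + h s ^ 2 := by
    intro s
    simp only [hg_def, hh_def]
    linear_combination (-(f s) ^ 2) * (Real.sin_sq_add_cos_sq (θ s / 2))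
  rw [ge_iff_le]
  have eA : ∫ s in (0:ℝ)..L, (4 * (deriv f s) ^ 2 + ‖deriv (deriv γ) s‖ ^ 2 * (f s) ^ 2)
      = 4 * ∫ s in (0:ℝ)..L, ((deriv g s) ^ 2 + (deriv h s) ^ 2) := by
    rw [← intervalIntegral.integral_const_mul]
    exact intervalIntegral.integral_congr (fun s _ => hA s)
  have eB : ∫ s in (0:ℝ)..L, (f s) ^ 2 = ∫ s in (0:ℝ)..L, (g s ^ 2 + h s ^ 2) :=
    intervalIntegral.integral_congr (fun s _ => hB s)
  rw [eA, eB]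
  have hc : 4 * π ^ 2 / L ^ 2 = 4 * (π / L) ^ 2 := by
    rw [div_pow]
    ring
  rw [hc]
  calc 4 * (π / L) ^ 2 * ∫ s in (0:ℝ)..L, (g s ^ 2 + h s ^ 2)
      = 4 * ((π / L) ^ 2 * ∫ s in (0:ℝ)..L, (g s ^ 2 + h s ^ 2)) := by ring
    _ ≤ 4 * ∫ s in (0:ℝ)..L, ((deriv g s) ^ 2 + (deriv h s) ^ 2) := by linarith
end

section
/- Let γ : ℝ → ℝ³ be a simple closed spherical curve of length L, parametrized by arclength (so ‖γ(s)‖ = 1 for all s and γ is injective on [0, L)), and let κ(s) = ‖γ''(s)‖ denote its curvature as a space curve. Then for every smooth L-periodic function f : ℝ → ℝ one has ∫₀^L (4 f'(s)² + κ(s)² f(s)²) ds ≥ (4π²/L²) ∫₀^L f(s)² ds; that is, the first eigenvalue μ₁ of the periodic Sturm–Liouville operator −4 d²/ds² + κ² on [0, L] satisfies 4π²/L² ≤ μ₁. -/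
open Real MeasureTheory


section Wirt
variable {L : ℝ}

lemma parseval_cont [hL : Fact (0 < L)] (F : C(AddCircle L, ℂ)) :
    Summable (fun n => ‖fourierCoeff (F : AddCircle L → ℂ) n‖^2) ∧
    ∑' n : ℤ, ‖fourierCoeff (F : AddCircle L → ℂ) n‖^2
      = ∫ t : AddCircle L, ‖F t‖^2 ∂AddCircle.haarAddCircle := by
  set G := ContinuousMap.toLp (E := ℂ) 2 AddCircle.haarAddCircle ℂ F with hG
  have hcoeff : ∀ n, fourierCoeff (G : AddCircle L → ℂ) n = fourierCoeff (F : AddCircle L → ℂ) n :=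
    fun n => fourierCoeff_toLp F n
  constructor
  · have hmem := lp.memℓp (fourierBasis.repr G)
    have hsum := hmem.summable (by norm_num : 0 < (2 : ENNReal).toReal)
    have : ∀ i : ℤ, ‖fourierBasis.repr G i‖ ^ (2 : ENNReal).toReal
        = ‖fourierCoeff (F : AddCircle L → ℂ) i‖^2 := by
      intro i
      rw [fourierBasis_repr, hcoeff]
      norm_num [Real.rpow_natCast]
    rwa [funext this] at hsum
  · have h1 := tsum_sq_fourierCoeff G
    simp_rw [hcoeff] at h1
    rw [h1]
    refine integral_congr_ae ?_
    filter_upwards [ContinuousMap.coeFn_toLp (p := 2) (𝕜 := ℂ) AddCircle.haarAddCircle F] with t ht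
    simp only [hG, ht]
end Wirt

section Wirt2
variable {L : ℝ}

lemma integral_addCircle_norm_sq [hLf : Fact (0 < L)] (F : C(AddCircle L, ℂ)) :
    ∫ t : AddCircle L, ‖F t‖^2 ∂AddCircle.haarAddCircle
      = (1/L) * ∫ x in (0:ℝ)..(0+L), ‖F (x : ℝ)‖^2 := by
  have h1 : ∫ x in (0:ℝ)..(0+L), ‖F (x : ℝ)‖^2
      = ∫ t : AddCircle L, ‖F t‖^2 ∂(volume : Measure (AddCircle L)) :=
    AddCircle.intervalIntegral_preimage L 0 (fun t => ‖F t‖^2)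
  rw [h1, AddCircle.volume_eq_smul_haarAddCircle, MeasureTheory.integral_smul_measure,
    ENNReal.toReal_ofReal hLf.out.le, smul_eq_mul]
  rw [one_div, inv_mul_eq_div, mul_comm, mul_div_assoc, div_self hLf.out.ne', mul_one]

lemma wirtinger_complex (hL : 0 < L) (u u' : ℝ → ℂ)
    (hderiv : ∀ x, HasDerivAt u (u' x) x) (hu'c : Continuous u')
    (hper : ∀ s, u (s + L) = u s) (hper' : ∀ s, u' (s + L) = u' s)
    (hmean : (∫ s in (0:ℝ)..L, u s) = 0) :
    (4 * π^2 / L^2) * ∫ s in (0:ℝ)..L, ‖u s‖^2 ≤ ∫ s in (0:ℝ)..L, ‖u' s‖^2 := by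
  haveI : Fact (0 < L) := ⟨hL⟩
  have huc : Continuous u := by
    rw [continuous_iff_continuousAt]; exact fun x => (hderiv x).continuousAt
  have hu0 : u 0 = u (0 + L) := by rw [zero_add, ← hper 0, zero_add]
  have hu'0 : u' 0 = u' (0 + L) := by rw [zero_add, ← hper' 0, zero_add]
  set F : C(AddCircle L, ℂ) :=
    ⟨AddCircle.liftIco L 0 u, AddCircle.liftIco_continuous hu0 huc.continuousOn⟩ with hF
  set F' : C(AddCircle L, ℂ) :=
    ⟨AddCircle.liftIco L 0 u', AddCircle.liftIco_continuous hu'0 hu'c.continuousOn⟩ with hF'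
  have hab : (0:ℝ) < 0 + L := lt_add_of_pos_right 0 hL
  have hcF : ∀ n, fourierCoeff (F : AddCircle L → ℂ) n = fourierCoeffOn hab u n := fun n =>
    fourierCoeff_liftIco_eq u n
  have hcF' : ∀ n, fourierCoeff (F' : AddCircle L → ℂ) n = fourierCoeffOn hab u' n := fun n =>
    fourierCoeff_liftIco_eq u' n
  -- termwise inequality
  have hterm : ∀ n : ℤ, (4 * π^2 / L^2) * ‖fourierCoeffOn hab u n‖^2
      ≤ ‖fourierCoeffOn hab u' n‖^2 := by
    intro n
    rcases eq_or_ne n 0 with rfl | hn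
    · have h0 : fourierCoeffOn hab u 0 = 0 := by
        rw [fourierCoeffOn_eq_integral]
        simp only [Int.cast_zero, neg_zero, fourier_zero, one_smul, zero_add, sub_zero]
        rw [hmean]
        simp
      rw [h0, norm_zero]
      have : ((0:ℝ))^2 = 0 := by norm_num
      rw [this, mul_zero]
      positivity
    · have hkey := fourierCoeffOn_of_hasDerivAt hab hn
        (f := u) (f' := u') (fun x _ => hderiv x) (hu'c.intervalIntegrable 0 (0 + L))
      have hub : u (0 + L) - u 0 = 0 := by rw [← hu0, sub_self]
      rw [hub, mul_zero, zero_sub] at hkey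
      have hnne : (n:ℂ) ≠ 0 := Int.cast_ne_zero.mpr hn
      have hpine : ((π:ℝ):ℂ) ≠ 0 := Complex.ofReal_ne_zero.mpr Real.pi_pos.ne'
      have hc_eq : fourierCoeffOn hab u n
          = ((L:ℝ):ℂ) / (2 * (π:ℝ) * Complex.I * n) * fourierCoeffOn hab u' n := by
        rw [hkey]
        push_cast
        field_simp
        ring
      have habs : ‖(2 * ((π:ℝ):ℂ) * Complex.I * (n:ℂ))‖ = 2 * π * |(n:ℝ)| := by
        simp only [norm_mul, Complex.norm_I, Complex.norm_ofNat, Complex.norm_real,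
          Complex.norm_intCast, mul_one, Real.norm_eq_abs, abs_of_pos Real.pi_pos]
      have hnormsq : ‖fourierCoeffOn hab u n‖^2
          = (L^2 / (4 * π^2 * (n:ℝ)^2)) * ‖fourierCoeffOn hab u' n‖^2 := by
        rw [hc_eq, norm_mul, norm_div, habs, Complex.norm_real, Real.norm_eq_abs]
        rw [mul_pow, div_pow, sq_abs, mul_pow, mul_pow, sq_abs]
        norm_num
      rw [hnormsq]
      have hn1 : (1:ℝ) ≤ |(n:ℝ)| := by
        rw [← Int.cast_abs]
        exact_mod_cast Int.one_le_abs hn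
      have hn2 : (1:ℝ) ≤ (n:ℝ)^2 := by nlinarith [sq_abs (n:ℝ)]
      have hrw : (4 * π^2 / L^2) * ((L^2 / (4 * π^2 * (n:ℝ)^2))
          * ‖fourierCoeffOn hab u' n‖^2) = ‖fourierCoeffOn hab u' n‖^2 / (n:ℝ)^2 := by
        field_simp
      rw [hrw]
      exact div_le_self (by positivity) hn2
  -- Parseval for both
  obtain ⟨hsumF, htsumF⟩ := parseval_cont F
  obtain ⟨hsumF', htsumF'⟩ := parseval_cont F'
  simp only [hcF] at hsumF htsumF
  simp only [hcF'] at hsumF' htsumF'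
  -- integral identities
  have hae : ∀ᵐ x : ℝ, x ≠ L := by
    have h0 : (volume ({L} : Set ℝ)) = 0 := Real.volume_singleton
    filter_upwards [measure_eq_zero_iff_ae_notMem.mp h0] with x hx
    simpa using hx
  have hFe : ∫ x in (0:ℝ)..(0+L), ‖F (x : ℝ)‖^2 = ∫ s in (0:ℝ)..L, ‖u s‖^2 := by
    rw [zero_add]
    refine intervalIntegral.integral_congr_ae ?_
    filter_upwards [hae] with x hx hx2
    rw [Set.uIoc_of_le hL.le] at hx2
    have hxm : x ∈ Set.Ico (0:ℝ) (0 + L) := by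
      rw [zero_add]; exact ⟨hx2.1.le, lt_of_le_of_ne hx2.2 hx⟩
    show ‖F (x : ℝ)‖^2 = ‖u x‖^2
    rw [hF]
    simp only [ContinuousMap.coe_mk]
    rw [AddCircle.liftIco_coe_apply hxm]
  have hFe' : ∫ x in (0:ℝ)..(0+L), ‖F' (x : ℝ)‖^2 = ∫ s in (0:ℝ)..L, ‖u' s‖^2 := by
    rw [zero_add]
    refine intervalIntegral.integral_congr_ae ?_
    filter_upwards [hae] with x hx hx2
    rw [Set.uIoc_of_le hL.le] at hx2
    have hxm : x ∈ Set.Ico (0:ℝ) (0 + L) := by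
      rw [zero_add]; exact ⟨hx2.1.le, lt_of_le_of_ne hx2.2 hx⟩
    show ‖F' (x : ℝ)‖^2 = ‖u' x‖^2
    rw [hF']
    simp only [ContinuousMap.coe_mk]
    rw [AddCircle.liftIco_coe_apply hxm]
  have hIu : ∫ s in (0:ℝ)..L, ‖u s‖^2 = L * ∑' n : ℤ, ‖fourierCoeffOn hab u n‖^2 := by
    rw [htsumF, integral_addCircle_norm_sq, hFe]
    field_simp
  have hIu' : ∫ s in (0:ℝ)..L, ‖u' s‖^2 = L * ∑' n : ℤ, ‖fourierCoeffOn hab u' n‖^2 := by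
    rw [htsumF', integral_addCircle_norm_sq, hFe']
    field_simp
  rw [hIu, hIu']
  have hmul : Summable (fun n : ℤ => (4 * π^2 / L^2) * ‖fourierCoeffOn hab u n‖^2) :=
    hsumF.mul_left _
  have hts : ∑' n : ℤ, (4 * π^2 / L^2) * ‖fourierCoeffOn hab u n‖^2
      ≤ ∑' n : ℤ, ‖fourierCoeffOn hab u' n‖^2 := hmul.tsum_le_tsum hterm hsumF'
  rw [tsum_mul_left] at hts
  calc (4 * π^2 / L^2) * (L * ∑' n : ℤ, ‖fourierCoeffOn hab u n‖^2)
      = L * ((4 * π^2 / L^2) * ∑' n : ℤ, ‖fourierCoeffOn hab u n‖^2) := by ring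
    _ ≤ L * ∑' n : ℤ, ‖fourierCoeffOn hab u' n‖^2 := by
        exact mul_le_mul_of_nonneg_left hts hL.le

end Wirt2

lemma wirtinger_real {L : ℝ} (hL : 0 < L) (u u' : ℝ → ℝ)
    (hderiv : ∀ x, HasDerivAt u (u' x) x) (hu'c : Continuous u')
    (hper : ∀ s, u (s + L) = u s) (hper' : ∀ s, u' (s + L) = u' s)
    (hmean : (∫ s in (0:ℝ)..L, u s) = 0) :
    (4 * π^2 / L^2) * ∫ s in (0:ℝ)..L, (u s)^2 ≤ ∫ s in (0:ℝ)..L, (u' s)^2 := by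
  have key := wirtinger_complex hL (fun s => (u s : ℂ)) (fun s => (u' s : ℂ))
    (fun x => (hderiv x).ofReal_comp) (Complex.continuous_ofReal.comp hu'c)
    (fun s => by simp [hper s]) (fun s => by simp [hper' s])
    (by rw [intervalIntegral.integral_ofReal, hmean]; simp)
  have h1 : ∀ g : ℝ → ℝ, (∫ s in (0:ℝ)..L, ‖(g s : ℂ)‖^2) = ∫ s in (0:ℝ)..L, (g s)^2 := by
    intro g
    refine intervalIntegral.integral_congr (fun x _ => ?_)
    rw [Complex.norm_real, Real.norm_eq_abs, sq_abs]
  rwa [h1 u, h1 u'] at key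

section Helpers

lemma deriv_periodic_of_periodic {E : Type*} [NormedAddCommGroup E] [NormedSpace ℝ E]
    (g : ℝ → E) {L : ℝ} (h : ∀ s, g (s + L) = g s) (s : ℝ) :
    deriv g (s + L) = deriv g s := by
  have hg : (fun t => g (t + L)) = g := funext h
  calc deriv g (s + L) = deriv (fun t => g (t + L)) s := (deriv_comp_add_const g L s).symm
    _ = deriv g s := by rw [hg]

lemma integral_sq_sub_mean {L : ℝ} (hL : 0 < L) (g : ℝ → ℝ) (hg : Continuous g) :
    ∫ s in (0:ℝ)..L, (g s - (∫ t in (0:ℝ)..L, g t)/L)^2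
      = (∫ s in (0:ℝ)..L, (g s)^2) - (∫ t in (0:ℝ)..L, g t)^2/L := by
  set I := ∫ t in (0:ℝ)..L, g t with hI
  have h1 : ∀ s ∈ Set.uIcc (0:ℝ) L, (g s - I/L)^2
      = ((g s)^2 - (2*(I/L))*g s) + (I/L)^2 := fun s _ => by ring
  rw [intervalIntegral.integral_congr h1]
  have hi1 : IntervalIntegrable (fun s => (g s)^2 - (2*(I/L))*g s) volume 0 L :=
    ((hg.pow 2).sub (continuous_const.mul hg)).intervalIntegrable 0 L
  have hi2 : IntervalIntegrable (fun s => (g s)^2) volume 0 L :=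
    (hg.pow 2).intervalIntegrable 0 L
  have hi3 : IntervalIntegrable (fun s => (2*(I/L))*g s) volume 0 L :=
    (continuous_const.mul hg).intervalIntegrable 0 L
  rw [intervalIntegral.integral_add hi1 intervalIntegrable_const,
    intervalIntegral.integral_sub hi2 hi3, intervalIntegral.integral_const_mul,
    intervalIntegral.integral_const, ← hI, smul_eq_mul]
  field_simp
  ring

lemma cs_integral {L : ℝ} (hL : 0 < L) (g : ℝ → ℝ) (hg : Continuous g) :
    (∫ s in (0:ℝ)..L, g s)^2 ≤ L * ∫ s in (0:ℝ)..L, (g s)^2 := by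
  have h0 : (0:ℝ) ≤ ∫ s in (0:ℝ)..L, (g s - (∫ t in (0:ℝ)..L, g t)/L)^2 :=
    intervalIntegral.integral_nonneg hL.le (fun x _ => sq_nonneg _)
  rw [integral_sq_sub_mean hL g hg] at h0
  have h1 : (∫ t in (0:ℝ)..L, g t)^2/L ≤ ∫ s in (0:ℝ)..L, (g s)^2 := by linarith
  calc (∫ t in (0:ℝ)..L, g t)^2 = ((∫ t in (0:ℝ)..L, g t)^2/L) * L := by field_simp
    _ ≤ (∫ s in (0:ℝ)..L, (g s)^2) * L := mul_le_mul_of_nonneg_right h1 hL.le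
    _ = L * ∫ s in (0:ℝ)..L, (g s)^2 := mul_comm _ _

lemma chord_le_arc {E : Type*} [NormedAddCommGroup E] [NormedSpace ℝ E] [CompleteSpace E]
    {γ : ℝ → E} (hd : ∀ x, HasDerivAt γ (deriv γ x) x) (hcont : Continuous (deriv γ))
    (hunit : ∀ s, ‖deriv γ s‖ = 1) {a b : ℝ} (hab : a ≤ b) : ‖γ b - γ a‖ ≤ b - a := by
  have h1 : ∫ s in a..b, deriv γ s = γ b - γ a :=
    intervalIntegral.integral_eq_sub_of_hasDerivAt (fun x _ => hd x)
      (hcont.intervalIntegrable a b)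
  rw [← h1]
  calc ‖∫ s in a..b, deriv γ s‖ ≤ ∫ s in a..b, ‖deriv γ s‖ :=
        intervalIntegral.norm_integral_le_integral_norm hab
    _ = ∫ s in a..b, (1:ℝ) := intervalIntegral.integral_congr (fun x _ => hunit x)
    _ = b - a := by simp

end Helpers

lemma pisq_le_twelve : Real.pi^2 ≤ 12 := by
  nlinarith [Real.pi_lt_d2, Real.pi_pos]

lemma pisq_quarter_mul_le {A : ℝ} (hA0 : 0 ≤ A) : Real.pi^2/4 * A ≤ 3 * A := by
  nlinarith [mul_le_mul_of_nonneg_right pisq_le_twelve hA0]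


/-- **Theorem 1 (spherical case).** For a simple closed curve of length `L` on the unit
sphere `S² ⊂ ℝ³`, parametrized by arclength, with curvature `κ(s) = ‖γ''(s)‖`, the first
eigenvalue of the periodic Sturm–Liouville operator `-4 d²/ds² + κ²` is at least `4π²/L²`:
every smooth `L`-periodic test function `f` satisfies the Rayleigh-quotient inequality. -/
theorem sturm_liouville_lower_bound_spherical_curve
    (L : ℝ) (hL : 0 < L) (γ : ℝ → EuclideanSpace ℝ (Fin 3))
    (hγ : ContDiff ℝ (⊤ : ℕ∞) γ)
    (hper : ∀ s : ℝ, γ (s + L) = γ s)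
    (hunit : ∀ s : ℝ, ‖deriv γ s‖ = 1)
    (hsph : ∀ s : ℝ, ‖γ s‖ = 1)
    (hsimple : Set.InjOn γ (Set.Ico 0 L))
    (f : ℝ → ℝ) (hf : ContDiff ℝ (⊤ : ℕ∞) f) (hfper : ∀ s : ℝ, f (s + L) = f s) :
    (∫ s in (0:ℝ)..L,
        (4 * (deriv f s)^2 + ‖deriv (deriv γ) s‖^2 * (f s)^2))
      ≥ (4 * π^2 / L^2) * ∫ s in (0:ℝ)..L, (f s)^2 := by
  -- basic smoothness facts
  have hγT : ContDiff ℝ ((⊤:ℕ∞) : WithTop ℕ∞) γ := hγ.of_le (by simp)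
  have hfT : ContDiff ℝ ((⊤:ℕ∞) : WithTop ℕ∞) f := hf.of_le (by simp)
  have hγdiff : Differentiable ℝ γ := hγT.differentiable (by simp)
  have hγ'cd : ContDiff ℝ ((⊤:ℕ∞) : WithTop ℕ∞) (deriv γ) := (contDiff_infty_iff_deriv.mp hγT).2
  have hγ'diff : Differentiable ℝ (deriv γ) := hγ'cd.differentiable (by simp)
  have hγ'c : Continuous (deriv γ) := hγ'cd.continuous
  have hγ''c : Continuous (deriv (deriv γ)) := (contDiff_infty_iff_deriv.mp hγ'cd).2.continuous
  have hγc : Continuous γ := hγT.continuous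
  have hfdiff : Differentiable ℝ f := hfT.differentiable (by simp)
  have hfc : Continuous f := hfT.continuous
  have hf'c : Continuous (deriv f) := (contDiff_infty_iff_deriv.mp hfT).2.continuous
  have hdγ : ∀ x, HasDerivAt γ (deriv γ x) x := fun x => (hγdiff x).hasDerivAt
  have hdγ' : ∀ x, HasDerivAt (deriv γ) (deriv (deriv γ) x) x := fun x => (hγ'diff x).hasDerivAt
  have hdf : ∀ x, HasDerivAt f (deriv f x) x := fun x => (hfdiff x).hasDerivAt
  -- periodicity of derivatives
  have hperγ' : ∀ s, deriv γ (s + L) = deriv γ s := deriv_periodic_of_periodic γ hper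
  have hperγ'' : ∀ s, deriv (deriv γ) (s + L) = deriv (deriv γ) s :=
    deriv_periodic_of_periodic (deriv γ) hperγ'
  have hperf' : ∀ s, deriv f (s + L) = deriv f s := deriv_periodic_of_periodic f hfper
  -- component derivative facts
  have hdcomp : ∀ (i : Fin 3) (s : ℝ),
      HasDerivAt (fun t => deriv γ t i) (deriv (deriv γ) s i) s := fun i s =>
    ((EuclideanSpace.proj (𝕜 := ℝ) i).hasFDerivAt.comp_hasDerivAt s (hdγ' s))
  have hccomp : ∀ i : Fin 3, Continuous (fun s => deriv γ s i) := fun i =>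
    ((EuclideanSpace.proj (𝕜 := ℝ) i).continuous).comp hγ'c
  have hccomp'' : ∀ i : Fin 3, Continuous (fun s => deriv (deriv γ) s i) := fun i =>
    ((EuclideanSpace.proj (𝕜 := ℝ) i).continuous).comp hγ''c
  -- norms as sums of squares
  have hnormsq : ∀ v : EuclideanSpace ℝ (Fin 3), ‖v‖^2 = ∑ i, (v i)^2 := by
    intro v
    rw [EuclideanSpace.norm_eq, Real.sq_sqrt (by positivity)]
    exact Finset.sum_congr rfl fun i _ => by rw [Real.norm_eq_abs, sq_abs]
  have hsum1 : ∀ s, ∑ i, (deriv γ s i)^2 = 1 := by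
    intro s
    rw [← hnormsq, hunit]
    norm_num
  have horth : ∀ s, ∑ i, deriv γ s i * deriv (deriv γ) s i = 0 := by
    intro s
    have hφ : ∀ t, HasDerivAt (fun r => ∑ i, (deriv γ r i)^2)
        (∑ i, 2 * deriv γ t i * deriv (deriv γ) t i) t := by
      intro t
      refine HasDerivAt.fun_sum (fun i _ => ?_)
      have := (hdcomp i t).fun_pow 2
      simpa [mul_comm, mul_assoc] using this
    have hconst : (fun r => ∑ i, (deriv γ r i)^2) = fun _ => (1:ℝ) := funext hsum1
    have h0 : (∑ i, 2 * deriv γ s i * deriv (deriv γ) s i) = 0 := by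
      have := hφ s
      rw [hconst] at this
      exact ((hasDerivAt_const s (1:ℝ)).unique this).symm
    have h2 : (2:ℝ) * ∑ i, deriv γ s i * deriv (deriv γ) s i = 0 := by
      rw [Finset.mul_sum]
      rw [← h0]
      exact Finset.sum_congr rfl fun i _ => by ring
    linarith
  have hκ : ∀ s, ∑ i, (deriv (deriv γ) s i)^2 = ‖deriv (deriv γ) s‖^2 :=
    fun s => (hnormsq _).symm
  -- test functions
  set c : Fin 3 → ℝ := fun i => (∫ t in (0:ℝ)..L, f t * deriv γ t i) / L with hc
  set u : Fin 3 → ℝ → ℝ := fun i s => f s * deriv γ s i - c i with hu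
  set u' : Fin 3 → ℝ → ℝ := fun i s => deriv f s * deriv γ s i + f s * deriv (deriv γ) s i
    with hu'
  have hcu : ∀ i, Continuous (u i) := fun i =>
    ((hfc.mul (hccomp i)).sub continuous_const)
  have hcu' : ∀ i, Continuous (u' i) := fun i =>
    ((hf'c.mul (hccomp i)).add (hfc.mul (hccomp'' i)))
  have hdu : ∀ i x, HasDerivAt (u i) (u' i x) x := by
    intro i x
    have := ((hdf x).mul (hdcomp i x)).sub_const (c i)
    simpa [hu, hu'] using this
  have hw : ∀ i : Fin 3, (4 * π^2 / L^2) * (∫ s in (0:ℝ)..L, (u i s)^2)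
      ≤ ∫ s in (0:ℝ)..L, (u' i s)^2 := by
    intro i
    refine wirtinger_real hL (u i) (u' i) (hdu i) (hcu' i) ?_ ?_ ?_
    · intro s; simp [hu, hfper s, hperγ' s]
    · intro s; simp [hu', hfper s, hperγ' s, hperγ'' s, hperf' s]
    · have hint : IntervalIntegrable (fun s => f s * deriv γ s i) volume 0 L :=
        (hfc.mul (hccomp i)).intervalIntegrable 0 L
      rw [hu]
      simp only
      rw [intervalIntegral.integral_sub hint intervalIntegrable_const,
        intervalIntegral.integral_const, hc]
      simp only [smul_eq_mul, sub_zero]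
      field_simp
      ring
  -- sum the Wirtinger inequalities
  have hsumw : (4 * π^2 / L^2) * (∑ i : Fin 3, ∫ s in (0:ℝ)..L, (u i s)^2)
      ≤ ∑ i : Fin 3, ∫ s in (0:ℝ)..L, (u' i s)^2 := by
    rw [Finset.mul_sum]
    exact Finset.sum_le_sum fun i _ => hw i
  -- identity for the sum of ∫ (u' i)^2
  have hT : ∑ i : Fin 3, ∫ s in (0:ℝ)..L, (u' i s)^2
      = ∫ s in (0:ℝ)..L, ((deriv f s)^2 + ‖deriv (deriv γ) s‖^2 * (f s)^2) := by
    rw [← intervalIntegral.integral_finset_sum (f := fun i s => (u' i s)^2)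
      (fun i _ => ((hcu' i).pow 2).intervalIntegrable 0 L)]
    refine intervalIntegral.integral_congr fun s _ => ?_
    calc ∑ i : Fin 3, (u' i s)^2
        = (deriv f s)^2 * ∑ i : Fin 3, (deriv γ s i)^2
          + (2 * (deriv f s * f s)) * ∑ i : Fin 3, deriv γ s i * deriv (deriv γ) s i
          + (f s)^2 * ∑ i : Fin 3, (deriv (deriv γ) s i)^2 := by
          rw [Finset.mul_sum, Finset.mul_sum, Finset.mul_sum, ← Finset.sum_add_distrib,
            ← Finset.sum_add_distrib]
          exact Finset.sum_congr rfl fun i _ => by rw [hu']; ring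
      _ = (deriv f s)^2 + ‖deriv (deriv γ) s‖^2 * (f s)^2 := by
          rw [hsum1 s, horth s, hκ s]; ring
  -- identity for the sum of ∫ (u i)^2
  have hS : ∑ i : Fin 3, ∫ s in (0:ℝ)..L, (u i s)^2
      = (∫ s in (0:ℝ)..L, (f s)^2)
        - (∑ i : Fin 3, (∫ t in (0:ℝ)..L, f t * deriv γ t i)^2) / L := by
    have hSi : ∀ i : Fin 3, ∫ s in (0:ℝ)..L, (u i s)^2
        = (∫ s in (0:ℝ)..L, (f s * deriv γ s i)^2)
          - (∫ t in (0:ℝ)..L, f t * deriv γ t i)^2 / L := fun i =>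
      integral_sq_sub_mean hL _ (hfc.mul (hccomp i))
    rw [Finset.sum_congr rfl fun i _ => hSi i, Finset.sum_sub_distrib, ← Finset.sum_div]
    congr 1
    rw [← intervalIntegral.integral_finset_sum (f := fun i s => (f s * deriv γ s i)^2)
      (fun i _ => (((hfc.mul (hccomp i))).pow 2).intervalIntegrable 0 L)]
    refine intervalIntegral.integral_congr fun s _ => ?_
    calc ∑ i : Fin 3, (f s * deriv γ s i)^2
        = (f s)^2 * ∑ i : Fin 3, (deriv γ s i)^2 := by
          rw [Finset.mul_sum]
          exact Finset.sum_congr rfl fun i _ => by ring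
      _ = (f s)^2 := by rw [hsum1 s]; ring
  -- the vector integral
  set Ivec : EuclideanSpace ℝ (Fin 3) := ∫ s in (0:ℝ)..L, f s • deriv γ s with hIvec
  have hintfγ' : IntervalIntegrable (fun s => f s • deriv γ s) volume 0 L :=
    (hfc.smul hγ'c).intervalIntegrable 0 L
  have hIcomp : ∀ i : Fin 3, (∫ t in (0:ℝ)..L, f t * deriv γ t i) = Ivec i := by
    intro i
    have h := (EuclideanSpace.proj (𝕜 := ℝ) i).intervalIntegral_comp_comm hintfγ'
    rw [hIvec]
    simpa using h
  have hMnorm : ∑ i : Fin 3, (∫ t in (0:ℝ)..L, f t * deriv γ t i)^2 = ‖Ivec‖^2 := by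
    rw [hnormsq]
    exact Finset.sum_congr rfl fun i _ => by rw [hIcomp i]
  -- integration by parts : Ivec = ∫ f' • (p - γ)
  have hfL : f L = f 0 := by rw [← hfper 0, zero_add]
  have hγL : γ L = γ 0 := by rw [← hper 0, zero_add]
  set p : EuclideanSpace ℝ (Fin 3) := (2:ℝ)⁻¹ • (γ 0 + γ (L/2)) with hp
  have hintf'γ : IntervalIntegrable (fun s => deriv f s • γ s) volume 0 L :=
    (hf'c.smul hγc).intervalIntegrable 0 L
  have hFTC : (∫ s in (0:ℝ)..L, (f s • deriv γ s + deriv f s • γ s)) = 0 := by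
    rw [intervalIntegral.integral_eq_sub_of_hasDerivAt
      (f := fun t => f t • γ t) (fun x _ => (hdf x).smul (hdγ x))
      (((hfc.smul hγ'c).add (hf'c.smul hγc)).intervalIntegrable 0 L)]
    rw [hfL, hγL, sub_self]
  have hf'FTC : (∫ s in (0:ℝ)..L, deriv f s) = 0 := by
    rw [intervalIntegral.integral_eq_sub_of_hasDerivAt (fun x _ => hdf x)
      (hf'c.intervalIntegrable 0 L), hfL, sub_self]
  have hIp : Ivec = ∫ s in (0:ℝ)..L, deriv f s • (p - γ s) := by
    have hs1 : (∫ s in (0:ℝ)..L, deriv f s • (p - γ s))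
        = (∫ s in (0:ℝ)..L, deriv f s • p) - ∫ s in (0:ℝ)..L, deriv f s • γ s := by
      rw [← intervalIntegral.integral_sub (f := fun s => deriv f s • p)
        (g := fun s => deriv f s • γ s) ((hf'c.smul continuous_const).intervalIntegrable 0 L)
        hintf'γ]
      refine intervalIntegral.integral_congr fun s _ => ?_
      rw [smul_sub]
    have hs2 : (∫ s in (0:ℝ)..L, deriv f s • p) = 0 := by
      rw [intervalIntegral.integral_smul_const, hf'FTC, zero_smul]
    have hs3 : Ivec + (∫ s in (0:ℝ)..L, deriv f s • γ s) = 0 := by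
      rw [hIvec, ← intervalIntegral.integral_add hintfγ' hintf'γ, hFTC]
    rw [hs1, hs2, zero_sub]
    have h4 : (∫ s in (0:ℝ)..L, deriv f s • γ s) = -Ivec :=
      eq_neg_of_add_eq_zero_right hs3
    rw [h4, neg_neg]
  -- pointwise bound on ‖p - γ s‖
  have hball : ∀ s ∈ Set.uIcc (0:ℝ) L, ‖p - γ s‖ ≤ L/4 := by
    intro s hs
    rw [Set.uIcc_of_le hL.le] at hs
    have hchord : ∀ a b : ℝ, a ≤ b → ‖γ b - γ a‖ ≤ b - a := fun a b hab =>
      chord_le_arc hdγ hγ'c hunit hab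
    have hdec : p - γ s = (2:ℝ)⁻¹ • ((γ 0 - γ s) + (γ (L/2) - γ s)) := by
      rw [hp]; module
    rw [hdec, norm_smul]
    have hbound : ‖(γ 0 - γ s) + (γ (L/2) - γ s)‖ ≤ L/2 := by
      rcases le_total s (L/2) with hcase | hcase
      · have h1 : ‖γ 0 - γ s‖ ≤ s := by
          rw [norm_sub_rev]
          simpa using hchord 0 s hs.1
        have h2 : ‖γ (L/2) - γ s‖ ≤ L/2 - s := by
          simpa using hchord s (L/2) hcase
        calc ‖(γ 0 - γ s) + (γ (L/2) - γ s)‖ ≤ ‖γ 0 - γ s‖ + ‖γ (L/2) - γ s‖ := norm_add_le _ _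
          _ ≤ s + (L/2 - s) := add_le_add h1 h2
          _ = L/2 := by ring
      · have h1 : ‖γ 0 - γ s‖ ≤ L - s := by
          rw [← hγL]
          simpa using hchord s L hs.2
        have h2 : ‖γ (L/2) - γ s‖ ≤ s - L/2 := by
          rw [norm_sub_rev]
          simpa using hchord (L/2) s hcase
        calc ‖(γ 0 - γ s) + (γ (L/2) - γ s)‖ ≤ ‖γ 0 - γ s‖ + ‖γ (L/2) - γ s‖ := norm_add_le _ _
          _ ≤ (L - s) + (s - L/2) := add_le_add h1 h2
          _ = L/2 := by ring
    calc ‖(2:ℝ)⁻¹‖ * ‖(γ 0 - γ s) + (γ (L/2) - γ s)‖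
        ≤ ‖(2:ℝ)⁻¹‖ * (L/2) := by
          refine mul_le_mul_of_nonneg_left hbound (norm_nonneg _)
      _ = L/4 := by rw [Real.norm_eq_abs]; rw [abs_of_pos (by norm_num)]; ring
  -- norm bound on Ivec
  have hnormI : ‖Ivec‖ ≤ (L/4) * ∫ s in (0:ℝ)..L, |deriv f s| := by
    rw [hIp]
    calc ‖∫ s in (0:ℝ)..L, deriv f s • (p - γ s)‖
        ≤ ∫ s in (0:ℝ)..L, ‖deriv f s • (p - γ s)‖ :=
          intervalIntegral.norm_integral_le_integral_norm hL.le
      _ ≤ ∫ s in (0:ℝ)..L, (L/4) * |deriv f s| := by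
          refine intervalIntegral.integral_mono_on hL.le
            ((hf'c.smul (continuous_const.sub hγc)).norm.intervalIntegrable 0 L)
            ((continuous_const.mul hf'c.abs).intervalIntegrable 0 L) fun s hs => ?_
          rw [norm_smul, Real.norm_eq_abs]
          rw [mul_comm (L/4) _]
          refine mul_le_mul_of_nonneg_left ?_ (abs_nonneg _)
          exact hball s (by rwa [Set.uIcc_of_le hL.le])
      _ = (L/4) * ∫ s in (0:ℝ)..L, |deriv f s| := intervalIntegral.integral_const_mul _ _
  -- Cauchy-Schwarz
  have hcs : (∫ s in (0:ℝ)..L, |deriv f s|)^2 ≤ L * ∫ s in (0:ℝ)..L, (deriv f s)^2 := by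
    have h1 := cs_integral hL (fun s => |deriv f s|) hf'c.abs
    have h2 : (∫ s in (0:ℝ)..L, |deriv f s|^2) = ∫ s in (0:ℝ)..L, (deriv f s)^2 :=
      intervalIntegral.integral_congr fun s _ => sq_abs _
    rwa [h2] at h1
  -- name the scalar quantities
  set A : ℝ := ∫ s in (0:ℝ)..L, (deriv f s)^2 with hA
  set B : ℝ := ∫ s in (0:ℝ)..L, ‖deriv (deriv γ) s‖^2 * (f s)^2 with hB
  set C : ℝ := ∫ s in (0:ℝ)..L, (f s)^2 with hC
  set J : ℝ := ∫ s in (0:ℝ)..L, |deriv f s| with hJ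
  have hA0 : 0 ≤ A := intervalIntegral.integral_nonneg hL.le fun x _ => sq_nonneg _
  have hJ0 : 0 ≤ J := intervalIntegral.integral_nonneg hL.le fun x _ => abs_nonneg _
  have hABsplit : (∫ s in (0:ℝ)..L, ((deriv f s)^2 + ‖deriv (deriv γ) s‖^2 * (f s)^2))
      = A + B := by
    rw [hA, hB, ← intervalIntegral.integral_add (f := fun s => (deriv f s)^2)
      (g := fun s => ‖deriv (deriv γ) s‖^2 * (f s)^2) ((hf'c.pow 2).intervalIntegrable 0 L)
      (((hγ''c.norm.pow 2).mul (hfc.pow 2)).intervalIntegrable 0 L)]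
  set Mv : ℝ := ‖Ivec‖^2 with hMv
  have hmain : (4 * π^2 / L^2) * (C - Mv / L) ≤ A + B := by
    have := hsumw
    rw [hT, hS, hMnorm, hABsplit] at this
    exact this
  have hMv0 : 0 ≤ Mv := sq_nonneg _
  have hIvecsq : Mv ≤ (L/4)^2 * (L * A) := by
    calc Mv = ‖Ivec‖^2 := hMv
      _ ≤ ((L/4) * J)^2 := by
          apply pow_le_pow_left₀ (norm_nonneg _) hnormI
      _ = (L/4)^2 * J^2 := by ring
      _ ≤ (L/4)^2 * (L * A) := by
          apply mul_le_mul_of_nonneg_left hcs (by positivity)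
  have hω : (0:ℝ) < 4 * π^2 / L^2 := by positivity
  have step1 : Mv / L ≤ ((L/4)^2 * (L * A)) / L := (div_le_div_iff_of_pos_right hL).mpr hIvecsq
  have step2 : (4 * π^2 / L^2) * (Mv / L) ≤ (4 * π^2 / L^2) * (((L/4)^2 * (L * A)) / L) :=
    mul_le_mul_of_nonneg_left step1 hω.le
  have heq : (4 * π^2 / L^2) * (((L/4)^2 * (L * A)) / L) = π^2/4 * A := by
    field_simp
  have hπ2 : π^2/4 * A ≤ 3 * A := pisq_quarter_mul_le hA0
  have hmain2 : (4 * π^2 / L^2) * C - (4 * π^2 / L^2) * (Mv / L) ≤ A + B := by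
    rw [← mul_sub]; exact hmain
  have hgoal : (∫ s in (0:ℝ)..L,
      (4 * (deriv f s)^2 + ‖deriv (deriv γ) s‖^2 * (f s)^2)) = 4 * A + B := by
    rw [hA, hB, ← intervalIntegral.integral_const_mul,
      ← intervalIntegral.integral_add (f := fun s => 4 * (deriv f s)^2)
      (g := fun s => ‖deriv (deriv γ) s‖^2 * (f s)^2) ((continuous_const.mul (hf'c.pow 2)).intervalIntegrable 0 L)
      (((hγ''c.norm.pow 2).mul (hfc.pow 2)).intervalIntegrable 0 L)]
  rw [ge_iff_le, hgoal]
  linarith [hmain2, step2, heq, hπ2]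
end

section
/- Let L > 0 and A be real numbers with 0 ≤ A ≤ 4π and 4πA − A² ≤ L². Then for all integers k and l, k² + (4π²/L²)·((2l + 1) − kA/(2π))² ≥ 4π²/L², and the minimum value 4π²/L² is attained at (k, l) = (0, 0). (These are the eigenvalues λ²(k,l) of the square of the Dirac operator on the flat torus ℝ²/Γ with the spin structure (ε₁, ε₂) = (0, 1), where Γ is generated by (2π, 0) and (A/2, L/2); the constraints on A and L hold for the length L and enclosed area A of a simple closed curve on the unit sphere by the spherical isoperimetric inequality.) -/
open Real

/-!
Multiplying by `L²` and writing `m = 2l + 1`, the claim becomes `4π² ≤ L²k² + (2πm - kA)²`.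
Replacing `L²` by the smaller `A(4π - A)` gives an expression that is affine in `A`:
it equals `4π²m²` at `A = 0` and `4π²(m - 2k)²` at `A = 4π`, both at least `4π²` because
`m` and `m - 2k` are odd.
-/

lemma one_le_sq_of_odd {n : ℤ} (hn : Odd n) : (1 : ℝ) ≤ (n : ℝ) ^ 2 := by
  have hn0 : n ≠ 0 := by rintro rfl; simp at hn
  exact_mod_cast (one_le_sq_iff_one_le_abs n).mpr (Int.one_le_abs hn0)

lemma four_pi_sq_le_of_odd (k : ℤ) {m : ℤ} (hm : Odd m) {A : ℝ} (hA0 : 0 ≤ A)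
    (hA : A ≤ 4 * π) :
    4 * π ^ 2 ≤ A * (4 * π - A) * (k : ℝ) ^ 2 + (2 * π * m - k * A) ^ 2 := by
  have hm' : (1 : ℝ) ≤ (m : ℝ) ^ 2 := one_le_sq_of_odd hm
  have hmk : (1 : ℝ) ≤ ((m : ℝ) - 2 * k) ^ 2 := by
    exact_mod_cast one_le_sq_of_odd (hm.sub_even (even_two_mul k))
  have hdiff : A * (4 * π - A) * (k : ℝ) ^ 2 + (2 * π * m - k * A) ^ 2 - 4 * π ^ 2
      = π * ((4 * π - A) * ((m : ℝ) ^ 2 - 1) + A * (((m : ℝ) - 2 * k) ^ 2 - 1)) := by ring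
  have hnonneg :
      0 ≤ π * ((4 * π - A) * ((m : ℝ) ^ 2 - 1) + A * (((m : ℝ) - 2 * k) ^ 2 - 1)) := by
    have := pi_pos
    have : 0 ≤ 4 * π - A := by linarith
    positivity
  linarith

/-- The Dirac eigenvalues `λ²(k,l) = k² + (4π²/L²)((2l+1) - kA/(2π))²` on the flat torus
`ℝ²/Γ` (with `Γ` generated by `(2π,0)` and `(A/2, L/2)` and spin structure `(0,1)`)
are bounded below by `4π²/L²`, provided `0 ≤ A ≤ 4π` and `4πA - A² ≤ L²`, and this
minimum is attained at `(k,l) = (0,0)`. -/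
theorem dirac_eigenvalues_flat_torus_min
    (L A : ℝ) (hL : 0 < L) (hA0 : 0 ≤ A) (hA4π : A ≤ 4 * π)
    (hiso : 4 * π * A - A^2 ≤ L^2) :
    (∀ k l : ℤ,
      (k:ℝ)^2 + (4 * π^2 / L^2) * ((2 * (l:ℝ) + 1) - (k:ℝ) * A / (2 * π))^2
        ≥ 4 * π^2 / L^2) ∧
    ((0:ℝ)^2 + (4 * π^2 / L^2) * ((2 * (0:ℝ) + 1) - (0:ℝ) * A / (2 * π))^2
        = 4 * π^2 / L^2) := by
  refine ⟨fun k l => ?_, by simp⟩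
  have key := four_pi_sq_le_of_odd k (odd_two_mul_add_one l) hA0 hA4π
  push_cast at key
  calc 4 * π ^ 2 / L ^ 2
      ≤ (A * (4 * π - A) * (k : ℝ) ^ 2 + (2 * π * (2 * l + 1) - k * A) ^ 2) / L ^ 2 := by
        gcongr
    _ ≤ (L ^ 2 * (k : ℝ) ^ 2 + (2 * π * (2 * l + 1) - k * A) ^ 2) / L ^ 2 := by
        gcongr
        linarith
    _ = (k:ℝ)^2 + (4 * π^2 / L^2) * ((2 * (l:ℝ) + 1) - (k:ℝ) * A / (2 * π))^2 := by
        field_simp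
        ring
end

section
/- Let γ : ℝ → ℝ³ be a closed curve of length L, parametrized by arclength, with curvature κ(s) = ‖γ''(s)‖. Then 4π²/L² ≤ (1/L) ∫₀^L κ(s)² ds. (This follows from the Fenchel–Milnor inequality 2π ≤ ∮_γ κ together with the Cauchy–Schwarz inequality.) -/
open Real MeasureTheory Complex intervalIntegral AddCircle
open scoped ENNReal

lemma wirtinger {L : ℝ} (hL : 0 < L) (f f' : ℝ → ℂ)
    (hd : ∀ s, HasDerivAt f (f' s) s) (hc' : Continuous f')
    (hper : Function.Periodic f L)
    (hmean : (∫ s in (0:ℝ)..L, f s) = 0) :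
    (2*π/L)^2 * ∫ s in (0:ℝ)..L, ‖f s‖^2 ≤ ∫ s in (0:ℝ)..L, ‖f' s‖^2 := by
  haveI : Fact (0 < L) := ⟨hL⟩
  have hc : Continuous f := by
    refine continuous_iff_continuousAt.mpr fun s => (hd s).continuousAt
  have hderiv : ∀ s, deriv f s = f' s := fun s => (hd s).deriv
  have hper' : Function.Periodic f' L := by
    intro s
    have h1 : (fun x => f (x + L)) = f := funext hper
    have h2 := deriv_comp_add_const f L (x := s)
    rw [h1, hderiv, hderiv] at h2
    exact h2.symm
  set F : AddCircle L → ℂ := hper.lift with hF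
  set G : AddCircle L → ℂ := hper'.lift with hG
  have hFc : Continuous F := hc.quotient_liftOn' _
  have hGc : Continuous G := hc'.quotient_liftOn' _
  -- Fourier coefficients as interval integrals
  have cF : ∀ n : ℤ, fourierCoeff F n
      = (1/L : ℝ) • ∫ x in (0:ℝ)..L, fourier (-n) (x : AddCircle L) • f x := by
    intro n
    rw [fourierCoeff_eq_intervalIntegral F n 0]
    norm_num
    exact Or.inl rfl
  have cG : ∀ n : ℤ, fourierCoeff G n
      = (1/L : ℝ) • ∫ x in (0:ℝ)..L, fourier (-n) (x : AddCircle L) • f' x := by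
    intro n
    rw [fourierCoeff_eq_intervalIntegral G n 0]
    norm_num
    exact Or.inl rfl
  -- zeroth coefficient vanishes
  have c0 : fourierCoeff F 0 = 0 := by
    rw [cF 0]
    simp [hmean]
  -- relation between coefficients of f and f'
  have crel : ∀ n : ℤ, fourierCoeff G n = (2 * π * I * n / L) * fourierCoeff F n := by
    intro n
    have hu : ∀ x ∈ Set.uIcc (0:ℝ) L, HasDerivAt (fun y : ℝ => fourier (-n) (y : AddCircle L))
        ((fun y : ℝ => (-2 * π * I * n / L) * fourier (-n) (y : AddCircle L)) x) x :=
      fun x _ => hasDerivAt_fourier_neg L n x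
    have hv : ∀ x ∈ Set.uIcc (0:ℝ) L, HasDerivAt f (f' x) x := fun x _ => hd x
    have hui : IntervalIntegrable (fun y : ℝ => (-2 * π * I * n / L) * fourier (-n) (y : AddCircle L))
        volume 0 L := by
      apply Continuous.intervalIntegrable
      exact continuous_const.mul ((map_continuous (fourier (-n))).comp (AddCircle.continuous_mk' L))
    have hvi : IntervalIntegrable f' volume 0 L := hc'.intervalIntegrable 0 L
    have ibp := intervalIntegral.integral_mul_deriv_eq_deriv_mul hu hv hui hvi
    have hbdry : fourier (-n) ((L : ℝ) : AddCircle L) * f L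
        - fourier (-n) ((0 : ℝ) : AddCircle L) * f 0 = 0 := by
      have h1 : ((L : ℝ) : AddCircle L) = ((0 : ℝ) : AddCircle L) := by
        simp [AddCircle.coe_period]
      have h2 : f L = f 0 := by simpa using hper 0
      rw [h1, h2]; ring
    rw [hbdry] at ibp
    -- ibp : ∫ fourier(-n) x * f' x = 0 - ∫ (-2πIn/L * fourier(-n) x) * f x
    rw [cG n, cF n]
    have : (∫ x in (0:ℝ)..L, fourier (-n) (x : AddCircle L) • f' x)
        = (2 * π * I * n / L) * ∫ x in (0:ℝ)..L, fourier (-n) (x : AddCircle L) • f x := by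
      simp only [smul_eq_mul]
      rw [ibp]
      rw [show (fun x : ℝ => (-2 * π * I * n / L) * fourier (-n) (x : AddCircle L) * f x)
          = (fun x : ℝ => (-2 * π * I * n / L) * (fourier (-n) (x : AddCircle L) * f x)) by
        funext x; ring]
      rw [intervalIntegral.integral_const_mul]
      ring
    rw [this]
    simp only [Complex.real_smul]
    ring
  -- Lp memberships
  have memF : MemLp F 2 (@haarAddCircle L _) := by
    obtain ⟨C, hC⟩ := (isCompact_univ (X := AddCircle L)).exists_bound_of_continuousOn
      hFc.continuousOn
    exact MemLp.of_bound hFc.aestronglyMeasurable C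
      (Filter.Eventually.of_forall fun x => hC x (Set.mem_univ x))
  have memG : MemLp G 2 (@haarAddCircle L _) := by
    obtain ⟨C, hC⟩ := (isCompact_univ (X := AddCircle L)).exists_bound_of_continuousOn
      hGc.continuousOn
    exact MemLp.of_bound hGc.aestronglyMeasurable C
      (Filter.Eventually.of_forall fun x => hC x (Set.mem_univ x))
  have coeF : ∀ n : ℤ, fourierCoeff (↑(memF.toLp F) : AddCircle L → ℂ) n = fourierCoeff F n := by
    intro n
    unfold fourierCoeff
    apply MeasureTheory.integral_congr_ae
    filter_upwards [memF.coeFn_toLp] with t ht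
    rw [ht]
  have coeG : ∀ n : ℤ, fourierCoeff (↑(memG.toLp G) : AddCircle L → ℂ) n = fourierCoeff G n := by
    intro n
    unfold fourierCoeff
    apply MeasureTheory.integral_congr_ae
    filter_upwards [memG.coeFn_toLp] with t ht
    rw [ht]
  have PF : (∑' n : ℤ, ‖fourierCoeff F n‖^2) = ∫ t, ‖F t‖^2 ∂(@haarAddCircle L _) := by
    have h := tsum_sq_fourierCoeff (memF.toLp F)
    simp only [coeF] at h
    rw [h]
    apply MeasureTheory.integral_congr_ae
    filter_upwards [memF.coeFn_toLp] with t ht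
    rw [ht]
  have PG : (∑' n : ℤ, ‖fourierCoeff G n‖^2) = ∫ t, ‖G t‖^2 ∂(@haarAddCircle L _) := by
    have h := tsum_sq_fourierCoeff (memG.toLp G)
    simp only [coeG] at h
    rw [h]
    apply MeasureTheory.integral_congr_ae
    filter_upwards [memG.coeFn_toLp] with t ht
    rw [ht]
  -- summability
  have sF : Summable fun n : ℤ => ‖fourierCoeff F n‖^2 := by
    have h := lp.memℓp (fourierBasis.repr (memF.toLp F))
    have h2 := (memℓp_gen_iff (p := 2) (by norm_num)).mp h
    simp only [fourierBasis_repr, coeF] at h2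
    convert h2 using 2 with n
    rw [show ((2:ℝ≥0∞).toReal) = ((2:ℕ):ℝ) by norm_num, Real.rpow_natCast]
  have sG : Summable fun n : ℤ => ‖fourierCoeff G n‖^2 := by
    have h := lp.memℓp (fourierBasis.repr (memG.toLp G))
    have h2 := (memℓp_gen_iff (p := 2) (by norm_num)).mp h
    simp only [fourierBasis_repr, coeG] at h2
    convert h2 using 2 with n
    rw [show ((2:ℝ≥0∞).toReal) = ((2:ℕ):ℝ) by norm_num, Real.rpow_natCast]
  -- termwise inequality
  have hterm : ∀ n : ℤ, (2*π/L)^2 * ‖fourierCoeff F n‖^2 ≤ ‖fourierCoeff G n‖^2 := by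
    intro n
    rcases eq_or_ne n 0 with rfl | hn
    · rw [c0]
      have h0 : (2*π/L)^2 * ‖(0:ℂ)‖^2 = 0 := by simp
      rw [h0]
      positivity
    · have hnorm : ‖(2 * ↑π * I * ↑n / ↑L : ℂ)‖ = 2*π*|(n:ℝ)|/L := by
        rw [norm_div, norm_mul, norm_mul, norm_mul]
        simp [abs_of_pos pi_pos, abs_of_pos hL]
      rw [crel n, norm_mul, hnorm, mul_pow]
      have h1 : (1:ℝ) ≤ |(n:ℝ)| := by
        rw [← Int.cast_abs]
        exact_mod_cast Int.one_le_abs hn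
      have h2 : 2*π/L ≤ 2*π*|(n:ℝ)|/L := by
        apply (div_le_div_iff_of_pos_right hL).mpr
        nlinarith [pi_pos]
      exact mul_le_mul_of_nonneg_right (pow_le_pow_left₀ (by positivity) h2 2) (sq_nonneg _)
  -- sum the termwise inequality
  have hsum : (2*π/L)^2 * ∑' n : ℤ, ‖fourierCoeff F n‖^2 ≤ ∑' n : ℤ, ‖fourierCoeff G n‖^2 := by
    rw [← tsum_mul_left]
    exact Summable.tsum_le_tsum hterm (sF.mul_left _) sG
  -- interval integrals vs haar integrals
  have IF : (∫ s in (0:ℝ)..L, ‖f s‖^2) = L * ∫ t, ‖F t‖^2 ∂(@haarAddCircle L _) := by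
    have h1 := AddCircle.intervalIntegral_preimage L 0 (fun b : AddCircle L => ‖F b‖^2)
    rw [zero_add] at h1
    calc (∫ s in (0:ℝ)..L, ‖f s‖^2) = ∫ b : AddCircle L, ‖F b‖^2 := h1
    _ = L * ∫ t, ‖F t‖^2 ∂(@haarAddCircle L _) := by
        rw [volume_eq_smul_haarAddCircle, MeasureTheory.integral_smul_measure,
          ENNReal.toReal_ofReal hL.le, smul_eq_mul]
  have IG : (∫ s in (0:ℝ)..L, ‖f' s‖^2) = L * ∫ t, ‖G t‖^2 ∂(@haarAddCircle L _) := by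
    have h1 := AddCircle.intervalIntegral_preimage L 0 (fun b : AddCircle L => ‖G b‖^2)
    rw [zero_add] at h1
    calc (∫ s in (0:ℝ)..L, ‖f' s‖^2) = ∫ b : AddCircle L, ‖G b‖^2 := h1
    _ = L * ∫ t, ‖G t‖^2 ∂(@haarAddCircle L _) := by
        rw [volume_eq_smul_haarAddCircle, MeasureTheory.integral_smul_measure,
          ENNReal.toReal_ofReal hL.le, smul_eq_mul]
  rw [IF, IG, ← PF, ← PG]
  calc (2*π/L)^2 * (L * ∑' n : ℤ, ‖fourierCoeff F n‖^2)
      = L * ((2*π/L)^2 * ∑' n : ℤ, ‖fourierCoeff F n‖^2) := by ring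
    _ ≤ L * ∑' n : ℤ, ‖fourierCoeff G n‖^2 := mul_le_mul_of_nonneg_left hsum hL.le

/-- For any closed curve `γ` of length `L` in `ℝ³`, parametrized by arclength, with
curvature `κ(s) = ‖γ''(s)‖`, one has `4π²/L² ≤ (1/L) ∮ κ²` (a consequence of the
Fenchel–Milnor inequality `2π ≤ ∮ κ` and the Cauchy–Schwarz inequality). -/
theorem fenchel_cauchy_schwarz_curvature_square_bound
    (L : ℝ) (hL : 0 < L) (γ : ℝ → EuclideanSpace ℝ (Fin 3))
    (hγ : ContDiff ℝ (⊤ : ℕ∞) γ)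
    (hper : ∀ s : ℝ, γ (s + L) = γ s)
    (hunit : ∀ s : ℝ, ‖deriv γ s‖ = 1) :
    4 * π^2 / L^2 ≤ (1 / L) * ∫ s in (0:ℝ)..L, ‖deriv (deriv γ) s‖^2 := by
  classical
  set T : ℝ → EuclideanSpace ℝ (Fin 3) := deriv γ with hTdef
  have hgi : ContDiff ℝ (⊤ : ℕ∞) γ := hγ.of_le (by simp)
  have hγd : Differentiable ℝ γ := (contDiff_infty_iff_deriv.mp hgi).1
  have hT : ContDiff ℝ (⊤ : ℕ∞) T := (contDiff_infty_iff_deriv.mp hgi).2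
  have hTd : Differentiable ℝ T := (contDiff_infty_iff_deriv.mp hT).1
  have hT' : Continuous (deriv T) := (contDiff_infty_iff_deriv.mp hT).2.continuous
  have hTper : Function.Periodic T L := by
    intro s
    have h1 : (fun x => γ (x + L)) = γ := funext hper
    have h2 := deriv_comp_add_const γ L (x := s)
    rw [h1] at h2
    exact h2.symm
  have hγL : γ L = γ 0 := by simpa using hper 0
  have hmean0 : (∫ s in (0:ℝ)..L, T s) = 0 := by
    rw [hTdef, intervalIntegral.integral_deriv_eq_sub (fun x _ => hγd.differentiableAt)
      (hT.continuous.intervalIntegrable 0 L), hγL, sub_self]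
  set φ : Fin 3 → (EuclideanSpace ℝ (Fin 3) →L[ℝ] ℂ) :=
    fun i => Complex.ofRealCLM.comp (EuclideanSpace.proj i) with hφ
  have hd : ∀ (i : Fin 3) (s : ℝ), HasDerivAt (fun s => φ i (T s)) (φ i (deriv T s)) s :=
    fun i s => ((φ i).hasFDerivAt.comp_hasDerivAt s (hTd s).hasDerivAt)
  have hc' : ∀ i : Fin 3, Continuous (fun s => φ i (deriv T s)) :=
    fun i => (φ i).continuous.comp hT'
  have hper_i : ∀ i : Fin 3, Function.Periodic (fun s => φ i (T s)) L :=
    fun i s => congrArg (φ i) (hTper s)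
  have hmean_i : ∀ i : Fin 3, (∫ s in (0:ℝ)..L, φ i (T s)) = 0 := by
    intro i
    rw [(φ i).intervalIntegral_comp_comm (hT.continuous.intervalIntegrable 0 L), hmean0,
      map_zero]
  have hx : ∀ x : EuclideanSpace ℝ (Fin 3), (∑ i : Fin 3, ‖φ i x‖^2) = ‖x‖^2 := by
    intro x
    rw [EuclideanSpace.norm_eq x, Real.sq_sqrt (by positivity)]
    apply Finset.sum_congr rfl
    intro i _
    congr 1
    simp [hφ, Complex.norm_real]
  have key : (2*π/L)^2 * L ≤ ∫ s in (0:ℝ)..L, ‖deriv T s‖^2 := by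
    have hW : ∀ i : Fin 3, (2*π/L)^2 * ∫ s in (0:ℝ)..L, ‖φ i (T s)‖^2
        ≤ ∫ s in (0:ℝ)..L, ‖φ i (deriv T s)‖^2 := fun i =>
      wirtinger hL _ _ (hd i) (hc' i) (hper_i i) (hmean_i i)
    have hsum1 : (∑ i : Fin 3, ∫ s in (0:ℝ)..L, ‖φ i (T s)‖^2) = L := by
      rw [← intervalIntegral.integral_finset_sum]
      · have h1 : ∀ s : ℝ, (∑ i : Fin 3, ‖φ i (T s)‖^2) = 1 := fun s => by
          rw [hx (T s), hTdef, hunit s, one_pow]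
        rw [intervalIntegral.integral_congr (g := fun _ => (1:ℝ)) (fun s _ => h1 s)]
        simp
      · intro i _
        exact (((φ i).continuous.comp hT.continuous).norm.pow 2).intervalIntegrable 0 L
    have hsum2 : (∑ i : Fin 3, ∫ s in (0:ℝ)..L, ‖φ i (deriv T s)‖^2)
        = ∫ s in (0:ℝ)..L, ‖deriv T s‖^2 := by
      rw [← intervalIntegral.integral_finset_sum]
      · exact intervalIntegral.integral_congr (fun s _ => hx (deriv T s))
      · intro i _
        exact (((φ i).continuous.comp hT').norm.pow 2).intervalIntegrable 0 L
    calc (2*π/L)^2 * L = ∑ i : Fin 3, (2*π/L)^2 * ∫ s in (0:ℝ)..L, ‖φ i (T s)‖^2 := by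
          rw [← Finset.mul_sum, hsum1]
      _ ≤ ∑ i : Fin 3, ∫ s in (0:ℝ)..L, ‖φ i (deriv T s)‖^2 :=
          Finset.sum_le_sum (fun i _ => hW i)
      _ = _ := hsum2
  have h2 : (2*π/L)^2 * L = 4*π^2/L := by field_simp; ring
  rw [h2] at key
  have h3 : 4*π^2/L^2 = (1/L) * (4*π^2/L) := by field_simp
  rw [h3]
  exact mul_le_mul_of_nonneg_left key (by positivity)
end

section
/- Let γ : ℝ → ℝ³ be a closed spherical curve of length L, parametrized by arclength (so ‖γ(s)‖ = 1 for all s), whose curvature κ(s) = ‖γ''(s)‖ is constant. Then the image of γ is contained in an affine plane of ℝ³; consequently γ traces a circle of some Euclidean radius r ∈ (0, 1], for which κ² = 1/r². -/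
open Real RealInnerProductSpace

/-- Three pairwise-orthogonal nonzero vectors in `ℝ³` span it, so a vector orthogonal
to all of them vanishes. -/
lemma orth3_eq_zero (a b d w : EuclideanSpace ℝ (Fin 3))
    (ha : a ≠ 0) (hb : b ≠ 0) (hd : d ≠ 0)
    (hab : ⟪a, b⟫ = 0) (had : ⟪a, d⟫ = 0) (hbd : ⟪b, d⟫ = 0)
    (hwa : ⟪a, w⟫ = 0) (hwb : ⟪b, w⟫ = 0) (hwd : ⟪d, w⟫ = 0) : w = 0 := by
  set e : Fin 3 → EuclideanSpace ℝ (Fin 3) := ![‖a‖⁻¹ • a, ‖b‖⁻¹ • b, ‖d‖⁻¹ • d] with hedef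
  have hnorm : ∀ x : EuclideanSpace ℝ (Fin 3), x ≠ 0 → ‖‖x‖⁻¹ • x‖ = 1 := by
    intro x hx
    rw [norm_smul, norm_inv, norm_norm, inv_mul_cancel₀ (norm_ne_zero_iff.mpr hx)]
  have hioff : ∀ x y : EuclideanSpace ℝ (Fin 3), ⟪x, y⟫ = 0 →
      ⟪‖x‖⁻¹ • x, ‖y‖⁻¹ • y⟫ = 0 := by
    intro x y hxy
    rw [real_inner_smul_left, real_inner_smul_right, hxy]; ring
  have hba : ⟪b, a⟫ = 0 := by rw [real_inner_comm]; exact hab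
  have hda : ⟪d, a⟫ = 0 := by rw [real_inner_comm]; exact had
  have hdb : ⟪d, b⟫ = 0 := by rw [real_inner_comm]; exact hbd
  have hON : Orthonormal ℝ e := by
    constructor
    · intro i
      fin_cases i
      · exact hnorm a ha
      · exact hnorm b hb
      · exact hnorm d hd
    · intro i k hik
      fin_cases i <;> fin_cases k <;>
        first
          | exact absurd rfl hik
          | exact hioff a b hab
          | exact hioff a d had
          | exact hioff b d hbd
          | exact hioff b a hba
          | exact hioff d a hda
          | exact hioff d b hdb
  have hspan : Submodule.span ℝ (Set.range e) = ⊤ :=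
    hON.linearIndependent.span_eq_top_of_card_eq_finrank
      (by simp [finrank_euclideanSpace_fin])
  have hiw : ∀ x : EuclideanSpace ℝ (Fin 3), ⟪x, w⟫ = 0 → ⟪‖x‖⁻¹ • x, w⟫ = 0 := by
    intro x hx
    rw [real_inner_smul_left, hx]; ring
  have hmem : w ∈ (Submodule.span ℝ (Set.range e))ᗮ := by
    rw [Submodule.mem_orthogonal]
    intro v hv
    induction hv using Submodule.span_induction with
    | mem x hx =>
        obtain ⟨i, rfl⟩ := hx
        fin_cases i
        · exact hiw a hwa
        · exact hiw b hwb
        · exact hiw d hwd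
    | zero => simp
    | add x y _ _ hx hy => rw [inner_add_left, hx, hy]; ring
    | smul t x _ hx => rw [real_inner_smul_left, hx]; ring
  rw [hspan, Submodule.top_orthogonal_eq_bot, Submodule.mem_bot] at hmem
  exact hmem

/-- A closed spherical curve of constant curvature is planar: its image lies in an affine
plane of `ℝ³`, hence it traces a circle of some Euclidean radius `r ∈ (0,1]` (a set of
points at distance `r` from a fixed center), for which `κ² = 1/r²`. -/
theorem spherical_curve_constant_curvature_is_circle
    (L : ℝ) (hL : 0 < L) (γ : ℝ → EuclideanSpace ℝ (Fin 3))
    (hγ : ContDiff ℝ (⊤ : ℕ∞) γ)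
    (hper : ∀ s : ℝ, γ (s + L) = γ s)
    (hunit : ∀ s : ℝ, ‖deriv γ s‖ = 1)
    (hsph : ∀ s : ℝ, ‖γ s‖ = 1)
    (κ₀ : ℝ) (hκ : ∀ s : ℝ, ‖deriv (deriv γ) s‖ = κ₀) :
    (∃ u : EuclideanSpace ℝ (Fin 3), u ≠ 0 ∧ ∃ c : ℝ, ∀ s : ℝ, ⟪γ s, u⟫ = c) ∧
    (∃ r : ℝ, 0 < r ∧ r ≤ 1 ∧
      (∃ center : EuclideanSpace ℝ (Fin 3), ∀ s : ℝ, ‖γ s - center‖ = r) ∧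
      κ₀^2 = 1 / r^2) := by
  set T := deriv γ with hTdef
  set g := deriv T with hgdef
  set j := deriv g with hjdef
  have hγ2 : ContDiff ℝ ((⊤:ℕ∞):WithTop ℕ∞) γ := hγ.of_le (by simp)
  have hT : ContDiff ℝ ((⊤:ℕ∞):WithTop ℕ∞) T := (contDiff_infty_iff_deriv.mp hγ2).2
  have hg : ContDiff ℝ ((⊤:ℕ∞):WithTop ℕ∞) g := (contDiff_infty_iff_deriv.mp hT).2
  have dγ : ∀ s, HasDerivAt γ (T s) s :=
    fun s => (hγ2.differentiable (by simp) s).hasDerivAt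
  have dT : ∀ s, HasDerivAt T (g s) s :=
    fun s => (hT.differentiable (by simp) s).hasDerivAt
  have dg : ∀ s, HasDerivAt g (j s) s :=
    fun s => (hg.differentiable (by simp) s).hasDerivAt
  -- A1 : ⟪γ, T⟫ = 0
  have A1 : ∀ s, ⟪γ s, T s⟫ = 0 := by
    intro s
    have c1 : HasDerivAt (fun t => ⟪γ t, γ t⟫) (0:ℝ) s := by
      have h : (fun t => ⟪γ t, γ t⟫) = fun _ : ℝ => (1:ℝ) := funext fun t => by
        rw [real_inner_self_eq_norm_sq, hsph t]; norm_num
      rw [h]; exact hasDerivAt_const s 1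
    have h := ((dγ s).inner ℝ (dγ s)).unique c1
    have h2 := real_inner_comm (γ s) (T s)
    linarith
  -- A2 : ⟪γ, g⟫ = -1
  have A2 : ∀ s, ⟪γ s, g s⟫ = -1 := by
    intro s
    have c1 : HasDerivAt (fun t => ⟪γ t, T t⟫) (0:ℝ) s := by
      have h : (fun t => ⟪γ t, T t⟫) = fun _ : ℝ => (0:ℝ) := funext fun t => A1 t
      rw [h]; exact hasDerivAt_const s 0
    have h := ((dγ s).inner ℝ (dT s)).unique c1
    have h2 : ⟪T s, T s⟫ = 1 := by
      rw [real_inner_self_eq_norm_sq, hunit s]; norm_num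
    have h3 := real_inner_comm (T s) (γ s)
    linarith
  -- A3 : ⟪T, g⟫ = 0
  have A3 : ∀ s, ⟪T s, g s⟫ = 0 := by
    intro s
    have c1 : HasDerivAt (fun t => ⟪T t, T t⟫) (0:ℝ) s := by
      have h : (fun t => ⟪T t, T t⟫) = fun _ : ℝ => (1:ℝ) := funext fun t => by
        rw [real_inner_self_eq_norm_sq, hunit t]; norm_num
      rw [h]; exact hasDerivAt_const s 1
    have h := ((dT s).inner ℝ (dT s)).unique c1
    have h2 := real_inner_comm (T s) (g s)
    linarith
  -- A4 : ⟪γ, j⟫ = 0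
  have A4 : ∀ s, ⟪γ s, j s⟫ = 0 := by
    intro s
    have c1 : HasDerivAt (fun t => ⟪γ t, g t⟫) (0:ℝ) s := by
      have h : (fun t => ⟪γ t, g t⟫) = fun _ : ℝ => (-1:ℝ) := funext fun t => A2 t
      rw [h]; exact hasDerivAt_const s (-1)
    have h := ((dγ s).inner ℝ (dg s)).unique c1
    have h2 := real_inner_comm (T s) (g s)
    have := A3 s
    linarith
  -- A6 : ⟪T, j⟫ = -κ₀²
  have A6 : ∀ s, ⟪T s, j s⟫ = -κ₀^2 := by
    intro s
    have c1 : HasDerivAt (fun t => ⟪T t, g t⟫) (0:ℝ) s := by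
      have h : (fun t => ⟪T t, g t⟫) = fun _ : ℝ => (0:ℝ) := funext fun t => A3 t
      rw [h]; exact hasDerivAt_const s 0
    have h := ((dT s).inner ℝ (dg s)).unique c1
    have h2 : ⟪g s, g s⟫ = κ₀^2 := by
      rw [real_inner_self_eq_norm_sq, hκ s]
    have h3 := real_inner_comm (g s) (T s)
    linarith
  -- A5 : ⟪g, j⟫ = 0
  have A5 : ∀ s, ⟪g s, j s⟫ = 0 := by
    intro s
    have c1 : HasDerivAt (fun t => ⟪g t, g t⟫) (0:ℝ) s := by
      have h : (fun t => ⟪g t, g t⟫) = fun _ : ℝ => (κ₀^2:ℝ) := funext fun t => by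
        rw [real_inner_self_eq_norm_sq, hκ t]
      rw [h]; exact hasDerivAt_const s _
    have h := ((dg s).inner ℝ (dg s)).unique c1
    have h2 := real_inner_comm (g s) (j s)
    linarith
  -- κ₀ ≥ 1
  have hκ1 : 1 ≤ κ₀ := by
    have h := abs_real_inner_le_norm (γ 0) (g 0)
    rw [A2 0, hsph 0, hκ 0] at h
    simpa using h
  rcases eq_or_lt_of_le hκ1 with heq | hlt
  · -- κ₀ = 1 : great circle
    have hgγ : ∀ s, g s = -γ s := by
      intro s
      have hn : ‖g s + γ s‖^2 = 0 := by
        rw [norm_add_sq_real, hκ s, hsph s, real_inner_comm, A2 s, ← heq]; norm_num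
      have h0 : g s + γ s = 0 := by
        rwa [pow_eq_zero_iff (two_ne_zero), norm_eq_zero] at hn
      exact add_eq_zero_iff_eq_neg.mp h0
    -- find a nonzero vector orthogonal to γ 0 and T 0
    obtain ⟨u, humem, hune⟩ :
        ∃ u : EuclideanSpace ℝ (Fin 3),
          u ∈ (Submodule.span ℝ {γ 0, T 0})ᗮ ∧ u ≠ 0 := by
      have hne : (Submodule.span ℝ ({γ 0, T 0} : Set (EuclideanSpace ℝ (Fin 3))))ᗮ ≠ ⊥ := by
        intro hbot
        have htop : Submodule.span ℝ ({γ 0, T 0} : Set (EuclideanSpace ℝ (Fin 3))) = ⊤ :=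
          Submodule.orthogonal_eq_bot_iff.mp hbot
        classical
        have h := finrank_span_finset_le_card (R := ℝ)
          ({γ 0, T 0} : Finset (EuclideanSpace ℝ (Fin 3)))
        have hcard : ({γ 0, T 0} : Finset (EuclideanSpace ℝ (Fin 3))).card ≤ 2 :=
          le_trans (Finset.card_insert_le _ _) (by simp)
        rw [Set.finrank] at h
        have hco : (({γ 0, T 0} : Finset (EuclideanSpace ℝ (Fin 3))) : Set (EuclideanSpace ℝ (Fin 3)))
            = ({γ 0, T 0} : Set (EuclideanSpace ℝ (Fin 3))) := by simp
        rw [hco, htop] at h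
        have : Module.finrank ℝ (⊤ : Submodule ℝ (EuclideanSpace ℝ (Fin 3))) = 3 := by
          rw [finrank_top, finrank_euclideanSpace_fin]
        omega
      obtain ⟨u, hu, hune⟩ := Submodule.exists_mem_ne_zero_of_ne_bot hne
      exact ⟨u, hu, hune⟩
    have hu1 : ⟪γ 0, u⟫ = 0 :=
      humem (γ 0) (Submodule.subset_span (by simp))
    have hu2 : ⟪T 0, u⟫ = 0 :=
      humem (T 0) (Submodule.subset_span (by simp))
    have d1 : ∀ s, HasDerivAt (fun t => ⟪γ t, u⟫) (⟪T s, u⟫) s := by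
      intro s
      have := (dγ s).inner ℝ (hasDerivAt_const s u)
      simpa using this
    have d2 : ∀ s, HasDerivAt (fun t => ⟪T t, u⟫) (-⟪γ s, u⟫) s := by
      intro s
      have := (dT s).inner ℝ (hasDerivAt_const s u)
      simpa [hgγ s, inner_neg_left] using this
    have dE : ∀ s, HasDerivAt (fun t => ⟪γ t, u⟫^2 + ⟪T t, u⟫^2) 0 s := by
      intro s
      have h := ((d1 s).pow 2).add ((d2 s).pow 2)
      have h' : HasDerivAt (fun t => ⟪γ t, u⟫^2 + ⟪T t, u⟫^2) _ s := h
      convert h' using 1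
      norm_num
      ring
    have hz : ∀ s, ⟪γ s, u⟫ = 0 := by
      intro s
      have hc := is_const_of_deriv_eq_zero (f := fun t => ⟪γ t, u⟫^2 + ⟪T t, u⟫^2)
        (fun t => (dE t).differentiableAt) (fun t => (dE t).deriv) s 0
      rw [hu1, hu2] at hc
      nlinarith [sq_nonneg (⟪γ s, u⟫), sq_nonneg (⟪T s, u⟫)]
    refine ⟨⟨u, hune, 0, hz⟩, 1, one_pos, le_refl 1, ⟨0, fun s => by simp [hsph s]⟩, by
      rw [← heq]; norm_num⟩
  · -- κ₀ > 1
    have hκpos : 0 < κ₀ := lt_trans one_pos hlt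
    have hκ2ne : (κ₀^2 : ℝ) ≠ 0 := by positivity
    have hγne : ∀ s, γ s ≠ 0 := fun s h => by
      have := hsph s
      rw [h, norm_zero] at this
      exact one_ne_zero this.symm
    have hTne : ∀ s, T s ≠ 0 := fun s h => by
      have := hunit s
      rw [h, norm_zero] at this
      exact one_ne_zero this.symm
    have hdsq : ∀ s, ‖g s + γ s‖^2 = κ₀^2 - 1 := by
      intro s
      rw [norm_add_sq_real, hκ s, hsph s, real_inner_comm, A2 s]; ring
    have hdne : ∀ s, g s + γ s ≠ 0 := by
      intro s h0
      have := hdsq s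
      rw [h0, norm_zero] at this
      nlinarith
    -- w := j + κ₀² T vanishes
    have hw : ∀ s, j s + κ₀^2 • T s = 0 := by
      intro s
      have hγw : ⟪γ s, j s + κ₀^2 • T s⟫ = 0 := by
        rw [inner_add_right, real_inner_smul_right, A4 s, A1 s]; ring
      have hTw : ⟪T s, j s + κ₀^2 • T s⟫ = 0 := by
        rw [inner_add_right, real_inner_smul_right, A6 s,
          real_inner_self_eq_norm_sq, hunit s]; ring
      have hgw : ⟪g s, j s + κ₀^2 • T s⟫ = 0 := by
        have hgT : ⟪g s, T s⟫ = 0 := by rw [real_inner_comm]; exact A3 s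
        rw [inner_add_right, real_inner_smul_right, A5 s, hgT]
        ring
      have hdw : ⟪g s + γ s, j s + κ₀^2 • T s⟫ = 0 := by
        rw [inner_add_left, hgw, hγw]; ring
      refine orth3_eq_zero (γ s) (T s) (g s + γ s) _ (hγne s) (hTne s) (hdne s)
        (A1 s) ?_ ?_ hγw hTw hdw
      · rw [inner_add_right, A2 s, real_inner_self_eq_norm_sq, hsph s]; norm_num
      · rw [inner_add_right, A3 s, real_inner_comm, A1 s]; ring
    -- v := g + κ₀² γ is constant
    have dv : ∀ s, HasDerivAt (fun t => g t + κ₀^2 • γ t) 0 s := by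
      intro s
      have h := (dg s).add ((dγ s).const_smul (κ₀^2))
      rw [hw s] at h
      exact h
    have hv : ∀ s, g s + κ₀^2 • γ s = g 0 + κ₀^2 • γ 0 :=
      fun s => is_const_of_deriv_eq_zero (fun t => (dv t).differentiableAt)
        (fun t => (dv t).deriv) s 0
    set V : EuclideanSpace ℝ (Fin 3) := g 0 + κ₀^2 • γ 0 with hVdef
    have hplane : ∀ s, ⟪γ s, V⟫ = κ₀^2 - 1 := by
      intro s
      rw [← hv s, inner_add_right, real_inner_smul_right, A2 s,
        real_inner_self_eq_norm_sq, hsph s]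
      ring
    have hVne : V ≠ 0 := by
      intro h0
      have := hplane 0
      rw [h0, inner_zero_right] at this
      nlinarith
    refine ⟨⟨V, hVne, κ₀^2 - 1, hplane⟩, 1/κ₀, by positivity, ?_, ?_, ?_⟩
    · rw [div_le_one hκpos]; linarith
    · refine ⟨(κ₀^2)⁻¹ • V, fun s => ?_⟩
      have hgs : γ s - (κ₀^2)⁻¹ • V = -((κ₀^2)⁻¹ • g s) := by
        rw [← hv s, smul_add, smul_smul, inv_mul_cancel₀ hκ2ne, one_smul]
        abel
      rw [hgs, norm_neg, norm_smul, hκ s, norm_inv, Real.norm_eq_abs,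
        abs_of_pos (by positivity : (0:ℝ) < κ₀^2)]
      field_simp
    · field_simp
end
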